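/- arXiv:2310.09984 — 8 statements merged into one kernel-verified Lean document; each statement's English description precedes it below -/
import Mathlib

section
/- Let g be continuous, decreasing, with g(1)=0 and g(y)>0 for y<1, and let v be a solution of v' = (1+v²)g(v/r) defined on all of [r₀,∞) with v > 0. Then for every ε ∈ (0,1), v(r) ≥ (1-ε)r for all sufficiently large r. Consequently v(r) = r + o(r) as r → ∞ (combined with v ≤ r). -/
/-!
Fix `m = 1 - ε` and `C = g m > 0`. If `v` stayed below the line `m r` on a half-line, then
`v' ≥ C (1 + v²)` there, so `arctan v` would grow at least linearly and leave `(-π/2, π/2)`: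
hence `v` reaches the line at arbitrarily large `r`. Once `C (1 + (m r)²) > m`, the line is a
barrier that `v` can only cross upwards, so `v ≥ m r` from then on. Together with `v ≤ r` this
squeezes `v - r` below `ε r` for every `ε`.
-/

open Filter Set

theorem false_of_mul_one_add_sq_le_deriv {v v' : ℝ → ℝ} {C R : ℝ} (hC : 0 < C)
    (hv : ∀ r, R ≤ r → HasDerivAt v (v' r) r)
    (hle : ∀ r, R ≤ r → C * (1 + v r ^ 2) ≤ v' r) : False := by
  have hF : ∀ r, R ≤ r → HasDerivAt (fun t => Real.arctan (v t) - C * t)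
      (1 / (1 + v r ^ 2) * v' r - C) r := fun r hr =>
    (hv r hr).arctan.sub (by simpa using (hasDerivAt_id r).const_mul C)
  have hmono : MonotoneOn (fun t => Real.arctan (v t) - C * t) (Ici R) := by
    refine monotoneOn_of_hasDerivWithinAt_nonneg (convex_Ici R)
      (fun r hr => (hF r hr).continuousAt.continuousWithinAt)
      (fun r hr => (hF r (interior_subset hr)).hasDerivWithinAt) fun r hr => ?_
    have hr : R ≤ r := interior_subset hr
    rw [sub_nonneg, one_div_mul_eq_div, le_div_iff₀ (by positivity)]
    exact hle r hr
  have hRπ : R ≤ R + Real.pi / C := le_add_of_nonneg_right (by positivity)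
  have hgain := hmono self_mem_Ici hRπ hRπ
  have hCπ : C * (R + Real.pi / C) = C * R + Real.pi := by field_simp
  simp only [hCπ] at hgain
  linarith [Real.arctan_lt_pi_div_two (v (R + Real.pi / C)), Real.neg_pi_div_two_lt_arctan (v R)]

theorem mul_le_of_eq_mul_imp_lt_deriv {v v' : ℝ → ℝ} {m a : ℝ}
    (hv : ∀ x, a ≤ x → HasDerivAt v (v' x) x) (ha : m * a ≤ v a)
    (hcross : ∀ x, a ≤ x → v x = m * x → m < v' x) {x : ℝ} (hx : a ≤ x) : m * x ≤ v x := by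
  have hline : ∀ y, HasDerivAt (fun t => m * t) m y := fun y => by
    simpa using (hasDerivAt_id y).const_mul m
  refine image_le_of_deriv_right_lt_deriv_boundary' (f := fun t => m * t) (B' := v')
    (fun y _ => (hline y).continuousAt.continuousWithinAt)
    (fun y _ => (hline y).hasDerivWithinAt) ha
    (fun y hy => (hv y hy.1).continuousAt.continuousWithinAt)
    (fun y hy => (hv y hy.1).hasDerivWithinAt) (fun y hy hyv => hcross y hy.1 hyv.symm)
    ⟨hx, le_rfl⟩

theorem eventually_mul_le_of_hasDerivAt {g v : ℝ → ℝ} (hanti : Antitone g) {m r₀ : ℝ}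
    (hm : 0 < m) (hgm : 0 < g m)
    (hode : ∀ r, r₀ ≤ r → HasDerivAt v ((1 + v r ^ 2) * g (v r / r)) r) :
    ∀ᶠ r in atTop, m * r ≤ v r := by
  have hgrow : ∀ᶠ r in atTop, m < (1 + (m * r) ^ 2) * g m :=
    (tendsto_atTop_add_const_left _ 1 ((tendsto_pow_atTop two_ne_zero).comp
      (tendsto_id.const_mul_atTop hm))).atTop_mul_const hgm |>.eventually_gt_atTop m
  obtain ⟨R, hR⟩ :=
    (hgrow.and ((eventually_ge_atTop r₀).and (eventually_gt_atTop 0))).exists_forall_of_atTop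
  obtain ⟨a, hRa, ha⟩ : ∃ a, R ≤ a ∧ m * a ≤ v a := by
    by_contra! hbelow
    refine false_of_mul_one_add_sq_le_deriv hgm (fun r hr => hode r (hR r hr).2.1) fun r hr => ?_
    rw [mul_comm]
    gcongr
    exact hanti ((div_le_iff₀ (hR r hr).2.2).2 (hbelow r hr).le)
  filter_upwards [eventually_ge_atTop a] with x hx
  refine mul_le_of_eq_mul_imp_lt_deriv (fun y hy => hode y (hR y (hRa.trans hy)).2.1)
    ha (fun y hy hyv => ?_) hx
  rw [hyv, mul_div_cancel_right₀ _ (hR y (hRa.trans hy)).2.2.ne']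
  exact (hR y (hRa.trans hy)).1

theorem isLittleO_sub_self_of_eventually_le {v : ℝ → ℝ}
    (hlow : ∀ ε : ℝ, 0 < ε → ε < 1 → ∀ᶠ r in atTop, (1 - ε) * r ≤ v r)
    (hup : ∀ᶠ r in atTop, v r ≤ r) : (fun r => v r - r) =o[atTop] (fun r : ℝ => r) := by
  refine Asymptotics.isLittleO_iff.2 fun c hc => ?_
  have hε : min c (1 / 2) < 1 := (min_le_right _ _).trans_lt (by norm_num)
  filter_upwards [hlow _ (lt_min hc (by norm_num)) hε, hup, eventually_ge_atTop 0]
    with r hlow hup hr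
  rw [Real.norm_eq_abs, Real.norm_eq_abs, abs_of_nonneg hr, abs_of_nonpos (sub_nonpos.2 hup)]
  nlinarith [min_le_left c (1 / 2)]

theorem stmt5_general (g : ℝ → ℝ) (hanti : StrictAnti g)
    (hgpos : ∀ y : ℝ, y < 1 → 0 < g y)
    (r₀ : ℝ) (v : ℝ → ℝ)
    (hode : ∀ r : ℝ, r₀ ≤ r → HasDerivAt v ((1 + (v r) ^ 2) * g (v r / r)) r) :
    (∀ ε : ℝ, 0 < ε → ε < 1 → ∀ᶠ r in atTop, (1 - ε) * r ≤ v r) ∧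
    ((∀ r : ℝ, r₀ ≤ r → v r ≤ r) →
      (fun r => v r - r) =o[atTop] (fun r : ℝ => r)) := by
  have hlow : ∀ ε : ℝ, 0 < ε → ε < 1 → ∀ᶠ r in atTop, (1 - ε) * r ≤ v r := fun ε hε hε1 =>
    eventually_mul_le_of_hasDerivAt hanti.antitone (sub_pos.2 hε1) (hgpos _ (by linarith)) hode
  exact ⟨hlow, fun hup =>
    isLittleO_sub_self_of_eventually_le hlow (eventually_atTop.2 ⟨r₀, hup⟩)⟩

/-- Sub-solution (1-ε)r: a global positive solution of v' = (1+v²)g(v/r)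
eventually lies above (1-ε)r; combined with v ≤ r this gives v = r + o(r). -/
theorem stmt5 (g : ℝ → ℝ) (hg : Continuous g) (hanti : StrictAnti g)
    (hg1 : g 1 = 0) (hgpos : ∀ y : ℝ, y < 1 → 0 < g y)
    (r₀ : ℝ) (hr₀ : 0 < r₀) (v : ℝ → ℝ)
    (hode : ∀ r : ℝ, r₀ ≤ r → HasDerivAt v ((1 + (v r) ^ 2) * g (v r / r)) r)
    (hvpos : ∀ r : ℝ, r₀ ≤ r → 0 < v r) :
    (∀ ε : ℝ, 0 < ε → ε < 1 → ∀ᶠ r in atTop, (1 - ε) * r ≤ v r) ∧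
    ((∀ r : ℝ, r₀ ≤ r → v r ≤ r) →
      (fun r => v r - r) =o[atTop] (fun r : ℝ => r)) :=
  stmt5_general g hanti hgpos r₀ v hode
end

section
/- Let f be a normalized nondegenerate C² speed (f(0,1)=1) and v the slope of the bowl-type solution solving v'=(1+v²)g(v/r). Then for every ε > 0, v(r) ≥ r - ε for all sufficiently large r; i.e. v(r) = r + o(1) as r → ∞. -/
/-!
Write `q = v' / (1 + v²)` and `y = v / r`, so that `f (q, y) = 1`. Since `f (0, y) = y`,
monotonicity of `f` gives `v' ≤ 0` above the diagonal `v = r`, and a Lipschitz bound for `f`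
on a compact box gives the Riccati-type inequality `(r - v) (1 + v²) ≤ M r v'` below it. Hence
`v` crosses the diagonal only downwards, so it eventually stays below it; below the diagonal it
grows without bound, and then `v' ≥ 2` whenever `v ≤ r - ε` at large `r`, so that `v - r`
reaches `-ε` and crosses it only upwards.
-/

open Filter Set

section Comparison

variable {w w' : ℝ → ℝ} {a b c C : ℝ}

theorem add_mul_sub_le_of_le_deriv (hab : a ≤ b) (hw : ∀ x ∈ Icc a b, HasDerivAt w (w' x) x)
    (hC : ∀ x ∈ Ico a b, C ≤ w' x) : w a + C * (b - a) ≤ w b :=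
  image_le_of_deriv_right_le_deriv_boundary (f := fun x => w a + C * (x - a)) (B := w)
    (by fun_prop)
    (fun x _ => (((hasDerivAt_id' x).sub_const a).const_mul C).const_add _ |>.hasDerivWithinAt)
    (by simp) (fun x hx => (hw x hx).continuousAt.continuousWithinAt)
    (fun x hx => (hw x (Ico_subset_Icc_self hx)).hasDerivWithinAt)
    (fun x hx => by simpa using hC x hx) ⟨hab, le_rfl⟩

theorem eventually_const_le_of_deriv_pos_of_eq (hw : ∀ x, a ≤ x → HasDerivAt w (w' x) x)
    (ha : c ≤ w a) (hc : ∀ x, a ≤ x → w x = c → 0 < w' x) :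
    ∀ᶠ x in atTop, c ≤ w x :=
  eventually_atTop.2 ⟨a, fun _ hb =>
    image_le_of_deriv_right_lt_deriv_boundary' (f := fun _ => c) (f' := fun _ => 0) (B := w)
      continuousOn_const (fun _ _ => hasDerivWithinAt_const _ _ _) ha
      (fun x hx => (hw x hx.1).continuousAt.continuousWithinAt)
      (fun x hx => (hw x hx.1).hasDerivWithinAt) (fun x hx h => hc x hx.1 h.symm)
      ⟨hb, le_rfl⟩⟩

theorem eventually_le_const_of_deriv_neg_of_eq (hw : ∀ x, a ≤ x → HasDerivAt w (w' x) x)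
    (ha : w a ≤ c) (hc : ∀ x, a ≤ x → w x = c → w' x < 0) :
    ∀ᶠ x in atTop, w x ≤ c :=
  eventually_atTop.2 ⟨a, fun _ hb =>
    image_le_of_deriv_right_lt_deriv_boundary (f := w) (B := fun _ => c) (B' := fun _ => 0)
      (fun x hx => (hw x hx.1).continuousAt.continuousWithinAt)
      (fun x hx => (hw x hx.1).hasDerivWithinAt) ha (fun x => hasDerivAt_const x c)
      (fun x hx h => hc x hx.1 h) ⟨hb, le_rfl⟩⟩

end Comparison

section Speed

variable {f : ℝ × ℝ → ℝ}

theorem strictMono_apply_left (hfx : ∀ p : ℝ × ℝ, 0 < deriv (fun t => f (t, p.2)) p.1)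
    (y : ℝ) : StrictMono fun t => f (t, y) :=
  strictMono_of_deriv_pos fun t => hfx (t, y)

theorem strictMono_apply_right (hfy : ∀ p : ℝ × ℝ, 0 < deriv (fun t => f (p.1, t)) p.2)
    (x : ℝ) : StrictMono fun t => f (x, t) :=
  strictMono_of_deriv_pos fun t => hfy (x, t)

theorem apply_zero_left
    (hhom : ∀ c : ℝ, 0 < c → ∀ x y : ℝ, f (c * x, c * y) = c * f (x, y))
    (hnorm : f (0, 1) = 1) {y : ℝ} (hy : 0 ≤ y) : f (0, y) = y := by
  rcases hy.eq_or_lt with rfl | hy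
  · have h := hhom 2 two_pos 0 0
    simp only [mul_zero] at h
    linarith
  · simpa [hnorm] using hhom y hy 0 1

theorem nonpos_of_apply_eq_one
    (hhom : ∀ c : ℝ, 0 < c → ∀ x y : ℝ, f (c * x, c * y) = c * f (x, y))
    (hfx : ∀ p : ℝ × ℝ, 0 < deriv (fun t => f (t, p.2)) p.1) (hnorm : f (0, 1) = 1)
    {q y : ℝ} (hy : 1 ≤ y) (h : f (q, y) = 1) : q ≤ 0 := by
  by_contra! hq
  have : f (0, y) < f (q, y) := strictMono_apply_left hfx y hq
  linarith [apply_zero_left hhom hnorm (zero_le_one.trans hy)]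

/-- For the implicit solution `g` of `f (g y, y) = 1` this says `g y ≥ (1 - y) / M` on `[0,1]`. -/
theorem exists_one_sub_le_mul_of_apply_eq_one (hf : ContDiff ℝ 2 f)
    (hhom : ∀ c : ℝ, 0 < c → ∀ x y : ℝ, f (c * x, c * y) = c * f (x, y))
    (hfx : ∀ p : ℝ × ℝ, 0 < deriv (fun t => f (t, p.2)) p.1)
    (hfy : ∀ p : ℝ × ℝ, 0 < deriv (fun t => f (p.1, t)) p.2) (hnorm : f (0, 1) = 1) :
    ∃ M > 0, ∀ q y : ℝ, 0 ≤ y → y ≤ 1 → f (q, y) = 1 → 1 - y ≤ M * q := by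
  have hf0 : ∀ y, 0 ≤ y → f (0, y) = y := fun y hy => apply_zero_left hhom hnorm hy
  have hf10 : 0 < f (1, 0) := by
    simpa [hf0 0 le_rfl] using strictMono_apply_left hfx 0 one_pos
  set Q := 2 / f (1, 0)
  have hQ : 0 < Q := by positivity
  have hfQ : f (Q, 0) = 2 := by
    have h := hhom Q hQ 1 0
    rw [mul_one, mul_zero] at h
    rw [h, div_mul_cancel₀ _ hf10.ne']
  -- every solution with `0 ≤ y ≤ 1` lies in the box `[0, Q] × [0, 1]`
  obtain ⟨K, hK⟩ := hf.contDiffOn.exists_lipschitzOnWith (s := Icc (0, 0) (Q, 1)) two_ne_zero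
    (convex_Icc _ _) isCompact_Icc
  refine ⟨K + 1, by positivity, fun q y hy0 hy1 h => ?_⟩
  have hq0 : 0 ≤ q := by
    by_contra! hq
    have : f (q, y) < f (0, y) := strictMono_apply_left hfx y hq
    linarith [hf0 y hy0]
  have hqQ : q ≤ Q := by
    by_contra! hq
    have h1 : f (Q, 0) ≤ f (Q, y) := (strictMono_apply_right hfy Q).monotone hy0
    have h2 : f (Q, y) < f (q, y) := strictMono_apply_left hfx y hq
    linarith
  have hlip := hK.dist_le_mul (q, y) ⟨⟨hq0, hy0⟩, ⟨hqQ, hy1⟩⟩ (0, y)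
    ⟨⟨le_rfl, hy0⟩, ⟨hQ.le, hy1⟩⟩
  rw [h, hf0 y hy0, Prod.dist_eq, dist_self, Real.dist_eq, Real.dist_eq, sub_zero,
    abs_of_nonneg hq0, abs_of_nonneg (by linarith), max_eq_left hq0] at hlip
  nlinarith

theorem deriv_nonpos_of_le_self
    (hhom : ∀ c : ℝ, 0 < c → ∀ x y : ℝ, f (c * x, c * y) = c * f (x, y))
    (hfx : ∀ p : ℝ × ℝ, 0 < deriv (fun t => f (t, p.2)) p.1) (hnorm : f (0, 1) = 1)
    {r v dv : ℝ} (hr : 0 < r) (hv : r ≤ v) (h : f (dv / (1 + v ^ 2), v / r) = 1) :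
    dv ≤ 0 := by
  have hq := nonpos_of_apply_eq_one hhom hfx hnorm ((one_le_div hr).2 hv) h
  simpa using (div_le_iff₀ (by positivity : (0 : ℝ) < 1 + v ^ 2)).1 hq

theorem sub_mul_le_mul_deriv {M r v dv : ℝ}
    (hbound : ∀ q y : ℝ, 0 ≤ y → y ≤ 1 → f (q, y) = 1 → 1 - y ≤ M * q)
    (hr : 0 < r) (hv0 : 0 ≤ v) (hv : v ≤ r) (h : f (dv / (1 + v ^ 2), v / r) = 1) :
    (r - v) * (1 + v ^ 2) ≤ M * r * dv := by
  have hq := hbound _ _ (div_nonneg hv0 hr.le) ((div_le_one hr).2 hv) h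
  rw [one_sub_div hr.ne', mul_div_assoc', div_le_div_iff₀ hr (by positivity)] at hq
  linarith

end Speed

namespace BowlSlope

variable {v dv : ℝ → ℝ} {M ε : ℝ}

theorem eventually_le_self (hd : ∀ r, 0 < r → HasDerivAt v (dv r) r)
    (hup : ∀ r, 0 < r → r ≤ v r → dv r ≤ 0) : ∀ᶠ r in atTop, v r ≤ r := by
  obtain ⟨a, ha, hva⟩ : ∃ a, 1 ≤ a ∧ v a ≤ a := by
    by_contra! h
    obtain ⟨b, hb, hvb⟩ : ∃ b, 1 ≤ b ∧ v 1 < b :=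
      ⟨max 1 (v 1 + 1), le_max_left _ _, by linarith [le_max_right 1 (v 1 + 1)]⟩
    have hdecr := add_mul_sub_le_of_le_deriv (w := fun r => -v r) (C := 0) hb
      (fun r hr => (hd r (by linarith [hr.1])).neg)
      (fun r hr => by simpa using hup r (by linarith [hr.1]) (h r hr.1).le)
    linarith [h b hb]
  have hdiag := eventually_le_const_of_deriv_neg_of_eq (w := fun r => v r - r) (a := a) (c := 0)
    (fun r hr => (hd r (by linarith)).sub (hasDerivAt_id' r)) (by linarith)
    (fun r hr hr0 => by linarith [hup r (by linarith) (by linarith)])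
  filter_upwards [hdiag] with r hr
  linarith

theorem tendsto_atTop_of_le_self (hd : ∀ r, 0 < r → HasDerivAt v (dv r) r)
    (hpos : ∀ r, 0 < r → 0 < v r) (hM : 0 < M)
    (hlow : ∀ r, 0 < r → v r ≤ r → (r - v r) * (1 + v r ^ 2) ≤ M * r * dv r)
    (hle : ∀ᶠ r in atTop, v r ≤ r) : Tendsto v atTop atTop := by
  obtain ⟨r₀, hr₀⟩ := eventually_atTop.1 (hle.and (eventually_gt_atTop 0))
  suffices h : ∀ V, 0 < V → ∀ᶠ r in atTop, V ≤ v r from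
    tendsto_atTop.2 fun V => (h (max V 1) (by positivity)).mono fun r hr => le_of_max_le_left hr
  intro V hV
  obtain ⟨a, ha, h2V⟩ : ∃ a, r₀ ≤ a ∧ 2 * V ≤ a :=
    ⟨_, le_max_left r₀ _, le_max_right _ (2 * V)⟩
  have ha0 : 0 < a := (hr₀ r₀ le_rfl).2.trans_le ha
  have hT : a ≤ a + 2 * M * V := le_add_of_nonneg_right (by positivity)
  obtain ⟨b, hab, hVb⟩ : ∃ b, a ≤ b ∧ V ≤ v b := by
    by_contra! h
    -- while `v < V ≤ r / 2`, the inequality gives `v' ≥ 1 / (2M)`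
    have hgrow := add_mul_sub_le_of_le_deriv (C := 1 / (2 * M)) hT
      (fun r hr => hd r (by linarith [hr.1])) (fun r hr => by
        have hr0 : 0 < r := by linarith [hr.1]
        have hvr := h r hr.1
        have hhalf : r / 2 ≤ (r - v r) * (1 + v r ^ 2) := by
          nlinarith [hpos r hr0, sq_nonneg (v r), hr.1]
        have hbound := (hlow r hr0 (by linarith [hr.1])).trans' hhalf
        rw [div_le_iff₀ (by positivity)]
        nlinarith)
    have hC : 1 / (2 * M) * (a + 2 * M * V - a) = V := by field_simp; ring
    linarith [h (a + 2 * M * V) hT, hpos a ha0]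
  refine eventually_const_le_of_deriv_pos_of_eq (a := b) (fun r hr => hd r (by linarith)) hVb
    fun r hr hvr => ?_
  have hr0 : 0 < r := by linarith
  have hlowr := hlow r hr0 (by linarith)
  rw [hvr] at hlowr
  have hgap : 0 < (r - V) * (1 + V ^ 2) := mul_pos (by linarith) (by positivity)
  exact pos_of_mul_pos_right (hgap.trans_le hlowr) (by positivity)

theorem eventually_two_le_deriv (hM : 0 < M)
    (hlow : ∀ r, 0 < r → v r ≤ r → (r - v r) * (1 + v r ^ 2) ≤ M * r * dv r)
    (hle : ∀ᶠ r in atTop, v r ≤ r) (htop : Tendsto v atTop atTop) (hε : 0 < ε) :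
    ∀ᶠ r in atTop, v r ≤ r - ε → 2 ≤ dv r := by
  filter_upwards [hle, htop.eventually_ge_atTop (2 * M), eventually_ge_atTop (8 * M / ε),
    eventually_gt_atTop 0] with r hvr hvM hrε hr0 hvε
  have hεr : 8 * M ≤ ε * r := by linarith [(div_le_iff₀ hε).1 hrε]
  suffices h : 2 * M * r ≤ (r - v r) * (1 + v r ^ 2) from
    le_of_mul_le_mul_left (by linarith [hlow r hr0 hvr]) (mul_pos hM hr0)
  rcases le_total (v r) (r / 2) with hsmall | hlarge
  · nlinarith [sq_nonneg (v r - 1)]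
  · nlinarith [mul_le_mul hlarge hlarge (by positivity) (by linarith)]

theorem eventually_sub_le_self (hd : ∀ r, 0 < r → HasDerivAt v (dv r) r)
    (hpos : ∀ r, 0 < r → 0 < v r) (hε : 0 < ε)
    (htwo : ∀ᶠ r in atTop, v r ≤ r - ε → 2 ≤ dv r) :
    ∀ᶠ r in atTop, r - ε ≤ v r := by
  obtain ⟨R, hR⟩ := eventually_atTop.1 (htwo.and (eventually_gt_atTop 0))
  have hR0 : 0 < R := (hR R le_rfl).2
  obtain ⟨b, hRb, hvb⟩ : ∃ b, R ≤ b ∧ b - ε ≤ v b := by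
    by_contra! h
    have hgrow := add_mul_sub_le_of_le_deriv (C := 2) (by linarith : R ≤ 2 * R)
      (fun r hr => hd r (by linarith [hr.1])) (fun r hr => (hR r hr.1).1 (h r hr.1).le)
    linarith [h (2 * R) (by linarith), hpos R hR0]
  have hgap := eventually_const_le_of_deriv_pos_of_eq (w := fun r => v r - r) (a := b) (c := -ε)
    (fun r hr => (hd r (by linarith)).sub (hasDerivAt_id' r)) (by linarith)
    (fun r hr hr0 => by linarith [(hR r (hRb.trans hr)).1 (by linarith)])
  filter_upwards [hgap] with r hr
  linarith

end BowlSlope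

open BowlSlope in
theorem stmt6_general (f : ℝ × ℝ → ℝ)
    (hf : ContDiff ℝ 2 f)
    (hhom : ∀ c : ℝ, 0 < c → ∀ x y : ℝ, f (c * x, c * y) = c * f (x, y))
    (hfx : ∀ p : ℝ × ℝ, 0 < deriv (fun t => f (t, p.2)) p.1)
    (hfy : ∀ p : ℝ × ℝ, 0 < deriv (fun t => f (p.1, t)) p.2)
    (hnorm : f (0, 1) = 1)
    (v dv : ℝ → ℝ)
    (hvpos : ∀ r : ℝ, 0 < r → 0 < v r)
    (hode : ∀ r : ℝ, 0 < r → HasDerivAt v (dv r) r ∧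
      f (dv r / (1 + (v r) ^ 2), v r / r) = 1) :
    (∀ ε : ℝ, 0 < ε → ∀ᶠ r in atTop, r - ε ≤ v r) ∧
    Tendsto (fun r => v r - r) atTop (nhds 0) := by
  obtain ⟨M, hM, hMq⟩ := exists_one_sub_le_mul_of_apply_eq_one hf hhom hfx hfy hnorm
  have hd : ∀ r, 0 < r → HasDerivAt v (dv r) r := fun r hr => (hode r hr).1
  have hle := eventually_le_self hd fun r hr hvr =>
    deriv_nonpos_of_le_self hhom hfx hnorm hr hvr (hode r hr).2
  have hlow : ∀ r, 0 < r → v r ≤ r → (r - v r) * (1 + v r ^ 2) ≤ M * r * dv r :=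
    fun r hr hvr => sub_mul_le_mul_deriv hMq hr (hvpos r hr).le hvr (hode r hr).2
  have htop := tendsto_atTop_of_le_self hd hvpos hM hlow hle
  have hlower : ∀ ε : ℝ, 0 < ε → ∀ᶠ r in atTop, r - ε ≤ v r := fun ε hε =>
    eventually_sub_le_self hd hvpos hε (eventually_two_le_deriv hM hlow hle htop hε)
  refine ⟨hlower, tendsto_order.2 ⟨fun a ha => ?_, fun a ha => ?_⟩⟩
  · filter_upwards [hlower (-a / 2) (by linarith)] with r hr
    linarith
  · filter_upwards [hle] with r hr
    linarith

/-- For a normalized nondegenerate C² speed, the bowl soliton slope satisfies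
v(r) ≥ r - ε for large r, i.e. v(r) = r + o(1). -/
theorem stmt6 (f : ℝ × ℝ → ℝ)
    (hf : ContDiff ℝ 2 f)
    (hhom : ∀ c : ℝ, 0 < c → ∀ x y : ℝ, f (c * x, c * y) = c * f (x, y))
    (hfx : ∀ p : ℝ × ℝ, 0 < deriv (fun t => f (t, p.2)) p.1)
    (hfy : ∀ p : ℝ × ℝ, 0 < deriv (fun t => f (p.1, t)) p.2)
    (hnorm : f (0, 1) = 1)
    (v dv : ℝ → ℝ) (hv0 : v 0 = 0)
    (hvpos : ∀ r : ℝ, 0 < r → 0 < v r)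
    (hode : ∀ r : ℝ, 0 < r → HasDerivAt v (dv r) r ∧
      f (dv r / (1 + (v r) ^ 2), v r / r) = 1) :
    (∀ ε : ℝ, 0 < ε → ∀ᶠ r in atTop, r - ε ≤ v r) ∧
    Tendsto (fun r => v r - r) atTop (nhds 0) :=
  stmt6_general f hf hhom hfx hfy hnorm v dv hvpos hode
end

section
/- For a normalized nondegenerate C² speed f with c := f_x(0,1) > 0, the function w(r) = r - (c-ε)/r is a super-solution of f(w'/(1+w²), w/r) = 1 for each ε ∈ (0,c) and all sufficiently large r, i.e. f(w'/(1+w²), w/r) ≥ 1 for large r. -/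
/-!
Put `a = w'/(1+w²)` and `b = w/r = 1 - (c-ε)/r²`, and fix a slope `s ∈ (c-ε, c)`. By homogeneity
`f (a, b) = b f (a/b, 1)`, and since `a/b → 0⁺` while `t ↦ f (t, 1)` has derivative `c > s` at `0`,
eventually `f (a/b, 1) ≥ 1 + s a/b`, i.e. `f (a, b) ≥ b + s a`. As `r² a → 1`, eventually
`s a > (c - ε) / r² = 1 - b`.
-/

open Filter Topology

theorem HasDerivAt.eventually_add_mul_lt {g : ℝ → ℝ} {x d s : ℝ} (hg : HasDerivAt g d x)
    (hs : s < d) : ∀ᶠ t in 𝓝[>] 0, g x + s * t < g (x + t) := by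
  filter_upwards [hg.tendsto_slope_zero_right.eventually_const_lt hs, self_mem_nhdsWithin]
    with t hslope (ht : 0 < t)
  rw [smul_eq_mul, lt_inv_mul_iff₀ ht] at hslope
  linarith

theorem add_mul_le_of_le_homogeneous {f : ℝ × ℝ → ℝ}
    (hhom : ∀ c : ℝ, 0 < c → ∀ x y : ℝ, f (c * x, c * y) = c * f (x, y)) {a b s : ℝ}
    (hb : 0 < b) (h : 1 + s * (a / b) ≤ f (a / b, 1)) : b + s * a ≤ f (a, b) := by
  have hscale : f (a, b) = b * f (a / b, 1) := by
    simpa [mul_div_cancel₀ a hb.ne'] using hhom b hb (a / b) 1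
  calc b + s * a = b * (1 + s * (a / b)) := by field_simp
    _ ≤ f (a, b) := hscale ▸ mul_le_mul_of_nonneg_left h hb.le

theorem tendsto_sq_mul_div_one_add_sub_div_sq (k : ℝ) :
    Tendsto (fun r : ℝ => r ^ 2 * ((1 + k / r ^ 2) / (1 + (r - k / r) ^ 2))) atTop (𝓝 1) := by
  have hcont : Continuous fun u : ℝ => (1 + k * u ^ 2) / (u ^ 2 + (1 - k * u ^ 2) ^ 2) := by
    refine .div (by fun_prop) (by fun_prop) fun u => ?_
    rcases eq_or_ne u 0 with rfl | hu
    · norm_num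
    · positivity
  have hlim := (hcont.tendsto 0).comp tendsto_inv_atTop_zero
  norm_num [Function.comp_def] at hlim
  refine hlim.congr' ?_
  filter_upwards [eventually_ne_atTop 0] with r hr
  field_simp

theorem eventually_one_le_of_homogeneous {f : ℝ × ℝ → ℝ}
    (hhom : ∀ c : ℝ, 0 < c → ∀ x y : ℝ, f (c * x, c * y) = c * f (x, y)) (hnorm : f (0, 1) = 1)
    {c k : ℝ} (hderiv : HasDerivAt (fun t => f (t, 1)) c 0) (hk : k < c) {a b : ℝ → ℝ}
    (ha : Tendsto (fun r => r ^ 2 * a r) atTop (𝓝 1)) (hb : ∀ᶠ r in atTop, b r = 1 - k / r ^ 2) :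
    ∀ᶠ r in atTop, 1 ≤ f (a r, b r) := by
  obtain ⟨s, hks, hsc⟩ := exists_between hk
  have ha0 : Tendsto a atTop (𝓝 0) := by
    refine (ha.div_atTop (tendsto_pow_atTop two_ne_zero)).congr' ?_
    filter_upwards [eventually_ne_atTop 0] with r hr
    field_simp
  have hb1 : Tendsto b atTop (𝓝 1) := by
    have hk0 : Tendsto (fun r : ℝ => k / r ^ 2) atTop (𝓝 0) :=
      tendsto_const_nhds.div_atTop (tendsto_pow_atTop two_ne_zero)
    simpa using (tendsto_const_nhds.sub hk0).congr' (EventuallyEq.symm hb)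
  have hapos : ∀ᶠ r in atTop, 0 < a r := by
    filter_upwards [ha.eventually_const_lt one_pos] with r hr
    exact pos_of_mul_pos_right hr (sq_nonneg r)
  have hbpos := hb1.eventually_const_lt one_pos
  have hab : Tendsto (fun r => a r / b r) atTop (𝓝[>] 0) := by
    refine tendsto_nhdsWithin_iff.2 ⟨?_, ?_⟩
    · rw [← zero_div (1 : ℝ)]
      exact ha0.div hb1 one_ne_zero
    · filter_upwards [hapos, hbpos] with r har hbr
      exact div_pos har hbr
  have hlin := hab.eventually (hderiv.eventually_add_mul_lt hsc)
  have hsa := (tendsto_const_nhds.mul ha).eventually_const_lt (show k < s * 1 by rwa [mul_one])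
  filter_upwards [hlin, hsa, hbpos, hb, eventually_ne_atTop 0] with r hlin hsa hbpos hb hr
  simp only [zero_add, hnorm] at hlin
  calc 1 = b r + k / r ^ 2 := by rw [hb]; ring
    _ ≤ b r + s * a r := by
      gcongr
      rw [div_le_iff₀ (by positivity)]
      linarith
    _ ≤ f (a r, b r) := add_mul_le_of_le_homogeneous hhom hbpos hlin.le

theorem stmt7_general (f : ℝ × ℝ → ℝ)
    (hf : ContDiff ℝ 2 f)
    (hhom : ∀ c : ℝ, 0 < c → ∀ x y : ℝ, f (c * x, c * y) = c * f (x, y))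
    (hnorm : f (0, 1) = 1)
    (c : ℝ) (hc : c = deriv (fun t => f (t, 1)) 0) :
    ∀ ε : ℝ, 0 < ε → ε < c → ∀ᶠ r in atTop,
      1 ≤ f ((1 + (c - ε) / r ^ 2) / (1 + (r - (c - ε) / r) ^ 2),
             (r - (c - ε) / r) / r) := by
  intro ε hε _
  have hderiv : HasDerivAt (fun t => f (t, 1)) c 0 := by
    have hdiff : Differentiable ℝ f := hf.differentiable (by norm_num)
    exact hc ▸ (by fun_prop : DifferentiableAt ℝ (fun t => f (t, 1)) 0).hasDerivAt
  refine eventually_one_le_of_homogeneous hhom hnorm hderiv (by linarith : c - ε < c)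
    (tendsto_sq_mul_div_one_add_sub_div_sq (c - ε)) ?_
  filter_upwards [eventually_ne_atTop 0] with r hr
  field_simp

/-- w(r) = r - (c-ε)/r is a super-solution of f(w'/(1+w²), w/r) = 1 for large r. -/
theorem stmt7 (f : ℝ × ℝ → ℝ)
    (hf : ContDiff ℝ 2 f)
    (hhom : ∀ c : ℝ, 0 < c → ∀ x y : ℝ, f (c * x, c * y) = c * f (x, y))
    (hfx : ∀ p : ℝ × ℝ, 0 < deriv (fun t => f (t, p.2)) p.1)
    (hfy : ∀ p : ℝ × ℝ, 0 < deriv (fun t => f (p.1, t)) p.2)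
    (hnorm : f (0, 1) = 1)
    (c : ℝ) (hc : c = deriv (fun t => f (t, 1)) 0) (hcpos : 0 < c) :
    ∀ ε : ℝ, 0 < ε → ε < c → ∀ᶠ r in atTop,
      1 ≤ f ((1 + (c - ε) / r ^ 2) / (1 + (r - (c - ε) / r) ^ 2),
             (r - (c - ε) / r) / r) :=
  stmt7_general f hf hhom hnorm c hc
end

section
/- Let f be a normalized nondegenerate C² speed with c = f_x(0,1). The slope v of the bowl-type solution satisfies v(r) = r - c/r + o(r⁻¹) as r → ∞. -/
/-!
A positively homogeneous function that is differentiable at the origin coincides with its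
derivative there, so the speed is `f (x, y) = c * x + y` and the slope equation becomes
`v' = (1 + v²) (1 - v / r) / c`.

Every estimate on `v` is then obtained by the same comparison argument: if a barrier difference
`φ` has derivative at least `δ > 0` wherever `φ ≤ 0`, then `φ` cannot stay negative and, once
nonnegative, can never cross zero again. Applied to `r - v`, to `arctan v - arctan (θ r)` for
`θ < 1`, and to `± (v - (r - K / r))` for `K ≠ c`, this traps `r (r - v)` between any two
constants on either side of `c`.
-/

open Filter Set Topology

theorem eventually_nonneg_of_deriv_ge_of_nonpos {φ φ' : ℝ → ℝ} {δ : ℝ} (hδ : 0 < δ)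
    (hφ : ∀ᶠ x in atTop, HasDerivAt φ (φ' x) x)
    (h : ∀ᶠ x in atTop, φ x ≤ 0 → δ ≤ φ' x) :
    ∀ᶠ x in atTop, 0 ≤ φ x := by
  obtain ⟨a, ha⟩ := eventually_atTop.1 (hφ.and h)
  obtain ⟨x₀, hx₀a, hx₀⟩ : ∃ x₀ ≥ a, 0 ≤ φ x₀ := by
    by_contra! hneg
    have hb : a ≤ a - φ a / δ :=
      (le_sub_self_iff a).2 (div_nonpos_of_nonpos_of_nonneg (hneg a le_rfl).le hδ.le)
    have hgrow := (convex_Ici a).mul_sub_le_image_sub_of_le_deriv (f := φ)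
      (fun x hx => (ha x hx).1.continuousAt.continuousWithinAt)
      (fun x hx => (ha x (interior_subset hx)).1.differentiableAt.differentiableWithinAt)
      (fun x hx => by
        have hx : a ≤ x := interior_subset hx
        rw [(ha x hx).1.deriv]
        exact (ha x hx).2 (hneg x hx).le)
      a self_mem_Ici _ hb hb
    rw [sub_sub_cancel_left, mul_neg, mul_div_cancel₀ _ hδ.ne'] at hgrow
    linarith [hneg _ hb]
  refine eventually_atTop.2 ⟨x₀, fun x hx => ?_⟩
  have hx₀x : ∀ y ∈ Icc x₀ x, a ≤ y := fun y hy => hx₀a.trans hy.1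
  have := image_le_of_deriv_right_lt_deriv_boundary' (f := fun y => -φ y) (f' := fun y => -φ' y)
    (B := 0) (B' := 0)
    (fun y hy => (ha y (hx₀x y hy)).1.neg.continuousAt.continuousWithinAt)
    (fun y hy => (ha y (hx₀x y (Ico_subset_Icc_self hy))).1.neg.hasDerivWithinAt)
    (by simpa using hx₀) continuousOn_const (fun _ _ => hasDerivWithinAt_const _ _ _)
    (fun y hy hy0 => by
      simp only [Pi.zero_apply, neg_eq_zero] at hy0 ⊢
      linarith [(ha y (hx₀x y (Ico_subset_Icc_self hy))).2 hy0.le])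
    ⟨hx, le_rfl⟩
  simpa using this

theorem eq_fderiv_zero_of_posHomogeneous {E F : Type*} [NormedAddCommGroup E] [NormedSpace ℝ E]
    [NormedAddCommGroup F] [NormedSpace ℝ F] {f : E → F} (hf : DifferentiableAt ℝ f 0)
    (hhom : ∀ t : ℝ, 0 < t → ∀ x, f (t • x) = t • f x) (x : E) :
    f x = fderiv ℝ f 0 x := by
  have hf0 : f 0 = 0 := by
    have h2 := hhom 2 two_pos 0
    rw [smul_zero, two_smul] at h2
    simpa using h2
  have hline : HasDerivAt (fun t : ℝ => f (t • x)) (fderiv ℝ f 0 x) 0 := by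
    have := (zero_smul ℝ x ▸ hf).hasFDerivAt.comp_hasDerivAt (0 : ℝ)
      ((hasDerivAt_id (0 : ℝ)).smul_const x)
    simpa [Function.comp_def] using this
  have hslope : Tendsto (slope (fun t : ℝ => f (t • x)) 0) (𝓝[>] 0) (𝓝 (fderiv ℝ f 0 x)) :=
    (hasDerivAt_iff_tendsto_slope.1 hline).mono_left (nhdsWithin_mono _ fun _ ht => ne_of_gt ht)
  refine tendsto_nhds_unique (tendsto_const_nhds.congr' ?_) hslope
  filter_upwards [self_mem_nhdsWithin] with t (ht : 0 < t)
  simp only [slope_def_module, hhom t ht, zero_smul, hf0, sub_zero, inv_smul_smul₀ ht.ne']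

theorem eq_linear_of_posHomogeneous (f : ℝ × ℝ → ℝ) (hf : DifferentiableAt ℝ f 0)
    (hhom : ∀ t : ℝ, 0 < t → ∀ x y : ℝ, f (t * x, t * y) = t * f (x, y)) (x y : ℝ) :
    f (x, y) = x * f (1, 0) + y * f (0, 1) := by
  have hL := eq_fderiv_zero_of_posHomogeneous hf (fun t ht p => hhom t ht p.1 p.2)
  have hxy : ((x, y) : ℝ × ℝ) = x • ((1 : ℝ), (0 : ℝ)) + y • ((0 : ℝ), (1 : ℝ)) := by simp
  rw [hL, hL, hL, hxy, map_add, map_smul, map_smul, smul_eq_mul, smul_eq_mul]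

theorem div_sq_sub_one_sub_div {r y K : ℝ} (hr : r ≠ 0) :
    K / r ^ 2 - (1 - y / r) = (y - (r - K * r⁻¹)) / r := by
  field_simp
  ring

abbrev SolvesSlopeODE (c : ℝ) (v : ℝ → ℝ) : Prop :=
  ∀ᶠ r in atTop, HasDerivAt v ((1 + v r ^ 2) * (1 - v r / r) / c) r

namespace SolvesSlopeODE

variable {c : ℝ} {v : ℝ → ℝ}

theorem eventually_le_self (hv : SolvesSlopeODE c v) (hc : 0 < c) :
    ∀ᶠ r in atTop, v r ≤ r := by
  have hφ := eventually_nonneg_of_deriv_ge_of_nonpos one_pos (φ := fun r => r - v r)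
    (hv.mono fun r hr => (hasDerivAt_id r).sub hr) ?_
  · exact hφ.mono fun r hr => sub_nonneg.1 hr
  filter_upwards [eventually_gt_atTop 0] with r hr hφ
  have hvr : 1 - v r / r ≤ 0 := by
    rw [sub_nonpos, le_div_iff₀ hr, one_mul]
    exact sub_nonpos.1 hφ
  have : (1 + v r ^ 2) * (1 - v r / r) / c ≤ 0 :=
    div_nonpos_of_nonpos_of_nonneg (mul_nonpos_of_nonneg_of_nonpos (by positivity) hvr) hc.le
  linarith

theorem eventually_mul_le (hv : SolvesSlopeODE c v) (hc : 0 < c)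
    {θ : ℝ} (hθ₀ : 0 < θ) (hθ₁ : θ < 1) :
    ∀ᶠ r in atTop, θ * r ≤ v r := by
  have hδ : 0 < (1 - θ) / (2 * c) := by have := sub_pos.2 hθ₁; positivity
  have htail : Tendsto (fun r => θ / (1 + (θ * r) ^ 2)) atTop (𝓝 0) :=
    tendsto_const_nhds.div_atTop <| tendsto_atTop_add_const_left _ 1 <|
      (tendsto_pow_atTop two_ne_zero).comp (tendsto_id.const_mul_atTop hθ₀)
  -- comparing `arctan v` rather than `v` with the barrier gives a growth rate independent of `v`
  have hφ := eventually_nonneg_of_deriv_ge_of_nonpos hδ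
    (φ := fun r => Real.arctan (v r) - Real.arctan (θ * r))
    (hv.mono fun r hr => hr.arctan.sub ((hasDerivAt_id r).const_mul θ).arctan) ?_
  · filter_upwards [hφ] with r hr
    exact Real.arctan_strictMono.le_iff_le.1 (sub_nonneg.1 hr)
  filter_upwards [htail.eventually_lt_const hδ, eventually_gt_atTop 0] with r hsmall hr hφ
  have hvr : v r / r ≤ θ :=
    (div_le_iff₀ hr).2 (Real.arctan_strictMono.le_iff_le.1 (sub_nonpos.1 hφ))
  have hslope : (1 - θ) / c ≤ 1 / (1 + v r ^ 2) * ((1 + v r ^ 2) * (1 - v r / r) / c) := by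
    rw [one_div_mul_eq_div, mul_div_assoc, mul_div_cancel_left₀ _ (by positivity)]
    gcongr
  have hhalf : (1 - θ) / c = (1 - θ) / (2 * c) + (1 - θ) / (2 * c) := by field_simp; ring
  simp only [id, mul_one, one_div_mul_eq_div] at hslope ⊢
  linarith

theorem tendsto_div_self (hv : SolvesSlopeODE c v) (hc : 0 < c) :
    Tendsto (fun r => v r / r) atTop (𝓝 1) := by
  refine tendsto_order.2 ⟨fun a ha => ?_, fun b hb => ?_⟩
  · obtain ⟨θ, haθ, hθ⟩ := exists_between (max_lt ha one_pos)
    filter_upwards [hv.eventually_mul_le hc (lt_of_le_of_lt (le_max_right a 0) haθ) hθ,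
      eventually_gt_atTop 0] with r hθr hr
    exact (le_max_left a 0).trans_lt (haθ.trans_le ((le_div_iff₀ hr).2 hθr))
  · filter_upwards [hv.eventually_le_self hc, eventually_gt_atTop 0] with r hvr hr
    exact ((div_le_one hr).2 hvr).trans_lt hb

theorem tendsto_one_add_sq_div_sq (hv : SolvesSlopeODE c v) (hc : 0 < c) :
    Tendsto (fun r => (1 + v r ^ 2) / r ^ 2) atTop (𝓝 1) := by
  have hlim := (tendsto_inv_atTop_zero.pow 2).add ((hv.tendsto_div_self hc).pow 2)
  rw [zero_pow two_ne_zero, one_pow, zero_add] at hlim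
  refine hlim.congr' ?_
  filter_upwards [eventually_ne_atTop 0] with r hr
  field_simp

theorem eventually_mul_sub_le (hv : SolvesSlopeODE c v) (hc : 0 < c) {K : ℝ} (hK : c < K) :
    ∀ᶠ r in atTop, r * (r - v r) ≤ K := by
  have hδ : 0 < (K / c - 1) / 3 := by
    have := (one_lt_div hc).2 hK
    linarith
  have hgain : ∀ᶠ r in atTop, 1 + 2 * ((K / c - 1) / 3) < (1 + v r ^ 2) / r ^ 2 * (K / c) := by
    refine ((hv.tendsto_one_add_sq_div_sq hc).mul_const (K / c)).eventually_const_lt ?_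
    linarith
  have htail : ∀ᶠ r in atTop, K / r ^ 2 < (K / c - 1) / 3 :=
    (tendsto_const_nhds.div_atTop (tendsto_pow_atTop two_ne_zero)).eventually_lt_const hδ
  have hφ := eventually_nonneg_of_deriv_ge_of_nonpos hδ (φ := fun r => v r - (r - K * r⁻¹))
    (by
      filter_upwards [hv, eventually_ne_atTop 0] with r hr hr₀
      exact hr.sub ((hasDerivAt_id r).sub ((hasDerivAt_inv hr₀).const_mul K))) ?_
  · filter_upwards [hφ, eventually_gt_atTop 0] with r hr hr₀
    have : r * (r - v r) = K - r * (v r - (r - K * r⁻¹)) := by field_simp; ring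
    nlinarith
  filter_upwards [hgain, htail, eventually_gt_atTop 0] with r hgain htail hr hφ
  have hcross : (1 + v r ^ 2) / r ^ 2 * (K / c) ≤ (1 + v r ^ 2) * (1 - v r / r) / c :=
    calc (1 + v r ^ 2) / r ^ 2 * (K / c) = (1 + v r ^ 2) * (K / r ^ 2) / c := by ring
      _ ≤ (1 + v r ^ 2) * (1 - v r / r) / c := by
        gcongr
        rw [← sub_nonpos, div_sq_sub_one_sub_div hr.ne']
        exact div_nonpos_of_nonpos_of_nonneg hφ hr.le
  have : K * -(r ^ 2)⁻¹ = -(K / r ^ 2) := by ring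
  simp only [this]
  linarith

theorem eventually_le_mul_sub (hv : SolvesSlopeODE c v) (hc : 0 < c) {K : ℝ} (hK₀ : 0 ≤ K)
    (hK : K < c) :
    ∀ᶠ r in atTop, K ≤ r * (r - v r) := by
  have hδ : 0 < (1 - K / c) / 2 := by
    have := (div_lt_one hc).2 hK
    linarith
  have hloss : ∀ᶠ r in atTop, (1 + v r ^ 2) / r ^ 2 * (K / c) < 1 - (1 - K / c) / 2 := by
    refine ((hv.tendsto_one_add_sq_div_sq hc).mul_const (K / c)).eventually_lt_const ?_
    linarith
  have hφ := eventually_nonneg_of_deriv_ge_of_nonpos hδ (φ := fun r => r - K * r⁻¹ - v r)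
    (by
      filter_upwards [hv, eventually_ne_atTop 0] with r hr hr₀
      exact ((hasDerivAt_id r).sub ((hasDerivAt_inv hr₀).const_mul K)).sub hr) ?_
  · filter_upwards [hφ, eventually_gt_atTop 0] with r hr hr₀
    have : r * (r - v r) = K + r * (r - K * r⁻¹ - v r) := by field_simp; ring
    nlinarith
  filter_upwards [hloss, eventually_gt_atTop 0] with r hloss hr hφ
  have hcross : (1 + v r ^ 2) * (1 - v r / r) / c ≤ (1 + v r ^ 2) / r ^ 2 * (K / c) :=
    calc (1 + v r ^ 2) * (1 - v r / r) / c ≤ (1 + v r ^ 2) * (K / r ^ 2) / c := by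
          gcongr
          rw [← sub_nonneg, div_sq_sub_one_sub_div hr.ne']
          exact div_nonneg (by linarith) hr.le
      _ = (1 + v r ^ 2) / r ^ 2 * (K / c) := by ring
  have : K * -(r ^ 2)⁻¹ = -(K / r ^ 2) := by ring
  have : 0 ≤ K / r ^ 2 := by positivity
  linarith

theorem tendsto_mul_sub_self (hv : SolvesSlopeODE c v) (hc : 0 < c) :
    Tendsto (fun r => r * (r - v r)) atTop (𝓝 c) := by
  refine tendsto_order.2 ⟨fun a ha => ?_, fun b hb => ?_⟩
  · obtain ⟨K, haK, hK⟩ := exists_between (max_lt ha hc)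
    exact (hv.eventually_le_mul_sub hc ((le_max_right a 0).trans haK.le) hK).mono
      fun r hr => ((le_max_left a 0).trans_lt haK).trans_le hr
  · obtain ⟨K, hK, hKb⟩ := exists_between hb
    exact (hv.eventually_mul_sub_le hc hK).mono fun r hr => hr.trans_lt hKb

end SolvesSlopeODE

theorem stmt9_general (f : ℝ × ℝ → ℝ)
    (hf : ContDiff ℝ 2 f)
    (hhom : ∀ c : ℝ, 0 < c → ∀ x y : ℝ, f (c * x, c * y) = c * f (x, y))
    (hfx : ∀ p : ℝ × ℝ, 0 < deriv (fun t => f (t, p.2)) p.1)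
    (hnorm : f (0, 1) = 1)
    (c : ℝ) (hc : c = deriv (fun t => f (t, 1)) 0)
    (v dv : ℝ → ℝ)
    (hode : ∀ r : ℝ, 0 < r → HasDerivAt v (dv r) r ∧
      f (dv r / (1 + (v r) ^ 2), v r / r) = 1) :
    (fun r : ℝ => v r - (r - c / r)) =o[atTop] (fun r : ℝ => r⁻¹) := by
  have hlin := eq_linear_of_posHomogeneous f (hf.differentiable two_ne_zero 0) hhom
  have hc' : c = f (1, 0) := by
    have hline : (fun t => f (t, 1)) = fun t => t * f (1, 0) + 1 :=
      funext fun t => by rw [hlin t 1, hnorm, one_mul]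
    rw [hc, hline]
    simp
  have hcpos : 0 < c := hc ▸ hfx (0, 1)
  have hv : SolvesSlopeODE c v := by
    filter_upwards [eventually_gt_atTop 0] with r hr
    obtain ⟨hder, hslope⟩ := hode r hr
    refine hder.congr_deriv ?_
    rw [hlin, hnorm, ← hc', mul_one] at hslope
    have hx : dv r / (1 + v r ^ 2) = (1 - v r / r) / c := by
      rw [eq_div_iff hcpos.ne']
      linarith
    rw [div_eq_iff (by positivity)] at hx
    rw [hx]
    ring
  rw [Asymptotics.isLittleO_iff_tendsto' ((eventually_ne_atTop 0).mono
    fun r hr h => absurd h (inv_ne_zero hr))]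
  have hlim := (hv.tendsto_mul_sub_self hcpos).const_sub c
  rw [sub_self] at hlim
  refine hlim.congr' ((eventually_ne_atTop 0).mono fun r hr => ?_)
  field_simp
  ring

/-- The bowl soliton slope satisfies v(r) = r - c/r + o(r⁻¹), c = f_x(0,1). -/
theorem stmt9 (f : ℝ × ℝ → ℝ)
    (hf : ContDiff ℝ 2 f)
    (hhom : ∀ c : ℝ, 0 < c → ∀ x y : ℝ, f (c * x, c * y) = c * f (x, y))
    (hfx : ∀ p : ℝ × ℝ, 0 < deriv (fun t => f (t, p.2)) p.1)
    (hfy : ∀ p : ℝ × ℝ, 0 < deriv (fun t => f (p.1, t)) p.2)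
    (hnorm : f (0, 1) = 1)
    (c : ℝ) (hc : c = deriv (fun t => f (t, 1)) 0)
    (v dv : ℝ → ℝ) (hv0 : v 0 = 0)
    (hvpos : ∀ r : ℝ, 0 < r → 0 < v r)
    (hode : ∀ r : ℝ, 0 < r → HasDerivAt v (dv r) r ∧
      f (dv r / (1 + (v r) ^ 2), v r / r) = 1) :
    (fun r : ℝ => v r - (r - c / r)) =o[atTop] (fun r : ℝ => r⁻¹) :=
  stmt9_general f hf hhom hfx hnorm c hc v dv hode
end

section
/- Let f be a normalized nondegenerate C² speed with c = f_x(0,1). The slope of the bowl-type solution satisfies v(r) = r - c/r + o(r⁻²) as r → ∞, and hence the graph height u (with u' = v) satisfies u(r) = r²/2 - c·log r + C + o(r⁻¹) for some constant C, as r → ∞. -/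
/-!
Positive 1-homogeneity and differentiability at the origin force the speed to be linear,
`f (x, y) = c * x + y`, so the slope solves `v' = (1 + v²) (r - v) / (c r)`. Along the
curves `r - c/r ± ε/r²` this right-hand side is `1 ± ε/(c r) + O(r⁻²)`, so they are barriers
that `v` can cross only towards the band between them. The solution must eventually enter the
band: if it stayed outside, `±(v - barrier) - (ε/2c) log r` would be eventually monotone yet
tend to `-∞`. Integrating the resulting `o(r⁻²)` error of `v` gives the expansion of `u`.
-/

open Filter Set Topology Asymptotics

theorem monotoneOn_Ici_of_hasDerivAt_nonneg {ψ ψ' : ℝ → ℝ} {a : ℝ}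
    (hψ : ∀ x ≥ a, HasDerivAt ψ (ψ' x) x) (hψ' : ∀ x ≥ a, 0 ≤ ψ' x) :
    MonotoneOn ψ (Ici a) := by
  refine monotoneOn_of_hasDerivWithinAt_nonneg (convex_Ici a)
    (fun x hx => (hψ x hx).continuousAt.continuousWithinAt)
    (fun x hx => (hψ x (interior_subset hx)).hasDerivWithinAt)
    (fun x hx => hψ' x (interior_subset hx))

theorem not_tendsto_atBot_of_hasDerivAt_nonneg {ψ ψ' : ℝ → ℝ}
    (hψ : ∀ᶠ x in atTop, HasDerivAt ψ (ψ' x) x) (hψ' : ∀ᶠ x in atTop, 0 ≤ ψ' x) :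
    ¬ Tendsto ψ atTop atBot := by
  intro h
  obtain ⟨a, ha⟩ := eventually_atTop.1 (hψ.and hψ')
  have hmono := monotoneOn_Ici_of_hasDerivAt_nonneg (fun x hx => (ha x hx).1)
    fun x hx => (ha x hx).2
  obtain ⟨x, hxa, hx⟩ :=
    ((eventually_ge_atTop a).and (h.eventually (eventually_lt_atBot (ψ a)))).exists
  exact (hmono self_mem_Ici hxa hxa).not_gt hx

theorem eventually_le_of_frequently_le {φ φ' B B' : ℝ → ℝ}
    (hφ : ∀ᶠ x in atTop, HasDerivAt φ (φ' x) x)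
    (hB : ∀ᶠ x in atTop, HasDerivAt B (B' x) x)
    (hcross : ∀ᶠ x in atTop, φ x = B x → φ' x < B' x)
    (hfreq : ∃ᶠ x in atTop, φ x ≤ B x) :
    ∀ᶠ x in atTop, φ x ≤ B x := by
  obtain ⟨a, ha⟩ := eventually_atTop.1 (hφ.and (hB.and hcross))
  obtain ⟨r, hr, hra⟩ := (hfreq.and_eventually (eventually_ge_atTop a)).exists
  filter_upwards [eventually_ge_atTop r] with x hx
  exact image_le_of_deriv_right_lt_deriv_boundary'
    (fun y hy => (ha y (hra.trans hy.1)).1.continuousAt.continuousWithinAt)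
    (fun y hy => (ha y (hra.trans hy.1)).1.hasDerivWithinAt) hr
    (fun y hy => (ha y (hra.trans hy.1)).2.1.continuousAt.continuousWithinAt)
    (fun y hy => (ha y (hra.trans hy.1)).2.1.hasDerivWithinAt)
    (fun y hy => (ha y (hra.trans hy.1)).2.2) ⟨hx, le_rfl⟩

theorem eventually_pos_of_eq_mul_inv_add {g P : ℝ → ℝ} {α : ℝ} (hα : 0 < α)
    (hP : ContinuousAt P 0) (hg : ∀ᶠ x in atTop, g x = α * x⁻¹ + P x⁻¹ * x⁻¹ ^ 2) :
    ∀ᶠ x in atTop, 0 < g x := by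
  have hlim : Tendsto (fun x : ℝ => α + P x⁻¹ * x⁻¹) atTop (𝓝 α) := by
    simpa using
      ((hP.tendsto.comp tendsto_inv_atTop_zero).mul tendsto_inv_atTop_zero).const_add α
  filter_upwards [hg, hlim.eventually (eventually_gt_nhds hα), eventually_gt_atTop 0]
    with x hgx hx hx0
  rw [hgx, show α * x⁻¹ + P x⁻¹ * x⁻¹ ^ 2 = x⁻¹ * (α + P x⁻¹ * x⁻¹) by ring]
  exact mul_pos (inv_pos.2 hx0) hx

theorem abs_sub_le_of_abs_deriv_le {g g' : ℝ → ℝ} {a ε : ℝ} (ha : 0 < a) (hε : 0 ≤ ε)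
    (hg : ∀ x ≥ a, HasDerivAt g (g' x) x) (hg' : ∀ x ≥ a, |g' x| ≤ ε * (x ^ 2)⁻¹)
    {x y : ℝ} (hx : a ≤ x) (hxy : x ≤ y) :
    |g y - g x| ≤ ε / x := by
  have hinv (t : ℝ) (ht : t ≥ a) : HasDerivAt (fun s => ε * s⁻¹) (ε * -(t ^ 2)⁻¹) t :=
    (hasDerivAt_inv (ha.trans_le ht).ne').const_mul ε
  have hlow := monotoneOn_Ici_of_hasDerivAt_nonneg (fun t ht => (hg t ht).sub (hinv t ht))
    fun t ht => by linarith [neg_abs_le (g' t), hg' t ht]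
  have hup := monotoneOn_Ici_of_hasDerivAt_nonneg (fun t ht => ((hg t ht).neg).sub (hinv t ht))
    fun t ht => by linarith [le_abs_self (g' t), hg' t ht]
  have h₁ := hlow hx (hx.trans hxy) hxy
  have h₂ := hup hx (hx.trans hxy) hxy
  have hy : 0 ≤ ε * y⁻¹ := mul_nonneg hε (inv_nonneg.2 (ha.le.trans (hx.trans hxy)))
  simp only [Pi.sub_apply, Pi.neg_apply] at h₁ h₂
  rw [abs_le, div_eq_mul_inv]
  constructor <;> linarith

theorem exists_isLittleO_inv_sub_const {g g' : ℝ → ℝ}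
    (hg : ∀ᶠ x in atTop, HasDerivAt g (g' x) x) (hg' : g' =o[atTop] fun x => (x ^ 2)⁻¹) :
    ∃ C, (fun x => g x - C) =o[atTop] fun x => x⁻¹ := by
  have hosc : ∀ ε > 0, ∀ᶠ x in atTop, ∀ y ≥ x, |g y - g x| ≤ ε / x := by
    intro ε hε
    obtain ⟨a, ha⟩ := eventually_atTop.1
      ((hg.and (isLittleO_iff.1 hg' hε)).and (eventually_gt_atTop 0))
    filter_upwards [eventually_ge_atTop a] with x hx y hy
    refine abs_sub_le_of_abs_deriv_le (ha a le_rfl).2 hε.le (fun t ht => (ha t ht).1.1)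
      (fun t ht => ?_) hx hy
    have h := (ha t ht).1.2
    have ht0 := (ha t ht).2
    rwa [Real.norm_eq_abs, Real.norm_eq_abs, abs_of_pos (a := (t ^ 2)⁻¹) (by positivity)] at h
  have hcauchy : CauchySeq g := by
    refine Metric.cauchySeq_iff'.2 fun ε hε => ?_
    obtain ⟨N, hN⟩ := ((hosc (ε / 2) (half_pos hε)).and (eventually_ge_atTop 1)).exists
    refine ⟨N, fun y hy => ?_⟩
    rw [Real.dist_eq]
    calc |g y - g N| ≤ ε / 2 / N := hN.1 y hy
      _ ≤ ε / 2 := div_le_self (half_pos hε).le hN.2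
      _ < ε := half_lt_self hε
  obtain ⟨C, hC⟩ := cauchySeq_tendsto_of_complete hcauchy
  refine ⟨C, isLittleO_iff.2 fun ε hε => ?_⟩
  filter_upwards [hosc ε hε, eventually_gt_atTop 0] with x hx hx0
  rw [Real.norm_eq_abs, Real.norm_eq_abs, abs_of_pos (inv_pos.2 hx0), abs_sub_comm,
    ← div_eq_mul_inv]
  exact le_of_tendsto ((hC.sub_const (g x)).abs) (eventually_atTop.2 ⟨x, hx⟩)

theorem tendsto_neg_mul_log_atBot {k : ℝ} (hk : 0 < k) :
    Tendsto (fun r => -(k * Real.log r)) atTop atBot :=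
  tendsto_neg_atTop_atBot.comp (Real.tendsto_log_atTop.const_mul_atTop hk)

theorem HasFDerivAt.eq_of_homogeneous {E F : Type*} [NormedAddCommGroup E] [NormedSpace ℝ E]
    [NormedAddCommGroup F] [NormedSpace ℝ F] {f : E → F} {f' : E →L[ℝ] F}
    (hf : HasFDerivAt f f' 0) (hhom : ∀ t : ℝ, 0 < t → ∀ x, f (t • x) = t • f x)
    (x : E) :
    f x = f' x := by
  have hf0 : f 0 = 0 := by
    simpa [two_smul] using hhom 2 two_pos 0
  have hline : HasDerivAt (fun t : ℝ => f (t • x)) (f' x) 0 := by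
    have h := hf.comp_hasDerivAt_of_eq (0 : ℝ) ((hasDerivAt_id' 0).smul_const x)
      (zero_smul ℝ x).symm
    rwa [one_smul] at h
  have hray : HasDerivWithinAt (fun t : ℝ => f (t • x)) ((1 : ℝ) • f x) (Ici 0) 0 := by
    refine ((hasDerivAt_id' (0 : ℝ)).smul_const (f x)).hasDerivWithinAt.congr
      (fun t ht => ?_) (by simp [hf0])
    rcases (mem_Ici.1 ht).eq_or_lt with rfl | ht
    · simp [hf0]
    · exact hhom t ht x
  simpa using (uniqueDiffWithinAt_Ici 0).eq_deriv _ hray hline.hasDerivWithinAt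

theorem eq_deriv_mul_add_of_homogeneous {f : ℝ × ℝ → ℝ} (hf : DifferentiableAt ℝ f 0)
    (hhom : ∀ c : ℝ, 0 < c → ∀ x y : ℝ, f (c * x, c * y) = c * f (x, y))
    (hnorm : f (0, 1) = 1) (x y : ℝ) :
    f (x, y) = deriv (fun t => f (t, 1)) 0 * x + y := by
  set L := fderiv ℝ f 0
  have hL (x y : ℝ) : f (x, y) = x * L (1, 0) + y * L (0, 1) := by
    rw [hf.hasFDerivAt.eq_of_homogeneous (fun t ht p => hhom t ht p.1 p.2),
      show ((x, y) : ℝ × ℝ) = x • (1, 0) + y • (0, 1) by simp, map_add, map_smul, map_smul,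
      smul_eq_mul, smul_eq_mul]
  have hL01 : L (0, 1) = 1 := by simpa [hL] using hnorm
  have hderiv : deriv (fun t => f (t, 1)) 0 = L (1, 0) := by
    simp_rw [hL, hL01]
    simp
  rw [hL, hderiv, hL01]
  ring

noncomputable def bowlRHS (c r w : ℝ) : ℝ := (1 + w ^ 2) * (r - w) / (c * r)

theorem eq_bowlRHS_of_mul_add_eq_one {c r d w : ℝ} (hc : c ≠ 0) (hr : r ≠ 0)
    (h : c * (d / (1 + w ^ 2)) + w / r = 1) : d = bowlRHS c r w := by
  unfold bowlRHS
  field_simp at h ⊢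
  linear_combination h

noncomputable def bowlBarrier (c e r : ℝ) : ℝ := r - c / r + e / r ^ 2

theorem hasDerivAt_bowlBarrier (c e : ℝ) {r : ℝ} (hr : r ≠ 0) :
    HasDerivAt (bowlBarrier c e) (1 + c / r ^ 2 - 2 * e / r ^ 3) r := by
  have h := ((hasDerivAt_id' r).sub ((hasDerivAt_const r c).div (hasDerivAt_id' r) hr)).add
    ((hasDerivAt_const r e).div (hasDerivAt_pow 2 r) (pow_ne_zero 2 hr))
  exact h.congr_deriv (by field_simp; ring)

theorem exists_bowlRHS_bowlBarrier_eq (c e : ℝ) (hc : c ≠ 0) :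
    ∃ ρ : ℝ → ℝ, Continuous ρ ∧ ∀ r ≠ 0,
      bowlRHS c r (bowlBarrier c e r) = 1 - e / c * r⁻¹ + ρ r⁻¹ * r⁻¹ ^ 2 := by
  -- expand in `y = r⁻¹`
  refine ⟨fun y => (1 - e / c * y) *
    (1 - 2 * c + 2 * e * y + c ^ 2 * y ^ 2 - 2 * c * e * y ^ 3 + e ^ 2 * y ^ 4), by fun_prop,
    fun r hr => ?_⟩
  unfold bowlRHS bowlBarrier
  field_simp
  ring

-- `∂_w ((1 + w²) (r - w)) = -(w (3 w - 2 r) + 1)`.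
theorem bowlRHS_antitoneOn {c r : ℝ} (hc : 0 < c) (hr : 0 < r) :
    AntitoneOn (bowlRHS c r) (Ici (2 * r / 3)) := by
  intro w₁ hw₁ w₂ hw₂ hw
  simp only [mem_Ici] at hw₁ hw₂
  unfold bowlRHS
  gcongr ?_ / _
  nlinarith [mul_nonneg (sub_nonneg.2 hw) (sub_nonneg.2 hw₁),
    mul_nonneg (sub_nonneg.2 hw) (sub_nonneg.2 hw₂),
    mul_nonneg (sub_nonneg.2 hw₁) (sub_nonneg.2 hw₂), mul_nonneg (sub_nonneg.2 hw) hr.le]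

theorem eventually_two_mul_div_three_le_bowlBarrier (c e : ℝ) :
    ∀ᶠ r in atTop, 2 * r / 3 ≤ bowlBarrier c e r := by
  filter_upwards [eventually_ge_atTop 1, eventually_ge_atTop (3 * (|c| + |e|))] with r h1 h2
  have hc : c / r ≤ |c| := (div_le_div_of_nonneg_right (le_abs_self c) (by linarith)).trans
    (div_le_self (abs_nonneg c) h1)
  have he : -|e| ≤ e / r ^ 2 := by
    rw [le_div_iff₀ (by positivity)]
    nlinarith [neg_abs_le e, abs_nonneg e, one_le_pow₀ (n := 2) h1]
  unfold bowlBarrier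
  linarith

section BowlODE

variable {c : ℝ} {v : ℝ → ℝ}

theorem eventually_two_mul_div_three_le (hc : 0 < c)
    (hv : ∀ᶠ r in atTop, HasDerivAt v (bowlRHS c r (v r)) r) :
    ∀ᶠ r in atTop, 2 * r / 3 ≤ v r := by
  refine eventually_le_of_frequently_le (φ' := fun _ => 2 / 3)
    (Eventually.of_forall fun r => by simpa using ((hasDerivAt_id' r).const_mul 2).div_const 3)
    hv ?_ ?_
  · filter_upwards [eventually_ge_atTop (3 * c), eventually_gt_atTop 0] with r hr hr0 hvr
    rw [← hvr, bowlRHS, lt_div_iff₀ (by positivity)]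
    nlinarith [sq_nonneg (2 * c - 1 / 2)]
  · -- below `2 r / 3`, `arctan v` would grow at least like `r / (3 c)`
    by_contra h
    rw [not_frequently] at h
    refine not_tendsto_atBot_of_hasDerivAt_nonneg (ψ := fun r => Real.arctan (v r) - r / (3 * c))
      (hv.mono fun r hr => hr.arctan.sub ((hasDerivAt_id' r).div_const (3 * c))) ?_ ?_
    · filter_upwards [h, eventually_gt_atTop 0] with r hr hr0
      have hdiv : 1 / (1 + v r ^ 2) * bowlRHS c r (v r) = (r - v r) / (c * r) := by
        unfold bowlRHS; field_simp
      rw [hdiv, sub_nonneg, div_le_div_iff₀ (by positivity) (by positivity)]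
      nlinarith
    · refine tendsto_atBot_mono (fun r => ?_) (tendsto_atBot_add_const_left _ (Real.pi / 2)
        (tendsto_neg_atTop_atBot.comp (tendsto_id.atTop_div_const (by positivity : 0 < 3 * c))))
      have := Real.arctan_lt_pi_div_two (v r)
      simp only [Function.comp_apply, id]
      linarith

theorem eventually_le_bowlBarrier (hc : 0 < c)
    (hv : ∀ᶠ r in atTop, HasDerivAt v (bowlRHS c r (v r)) r) {ε : ℝ} (hε : 0 < ε) :
    ∀ᶠ r in atTop, v r ≤ bowlBarrier c ε r := by
  obtain ⟨ρ, hρ, hρeq⟩ := exists_bowlRHS_bowlBarrier_eq c ε hc.ne'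
  have hgap (α : ℝ) (hα : α < ε / c) : ∀ᶠ r in atTop,
      α * r⁻¹ < 1 + c / r ^ 2 - 2 * ε / r ^ 3 - bowlRHS c r (bowlBarrier c ε r) := by
    have := eventually_pos_of_eq_mul_inv_add (sub_pos.2 hα)
      (P := fun y => c - 2 * ε * y - ρ y) (by fun_prop) (g := fun r =>
        1 + c / r ^ 2 - 2 * ε / r ^ 3 - bowlRHS c r (bowlBarrier c ε r) - α * r⁻¹)
      (by filter_upwards [eventually_ne_atTop 0] with r hr; rw [hρeq r hr]; field_simp; ring)
    filter_upwards [this] with r hr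
    linarith
  refine eventually_le_of_frequently_le hv
    ((eventually_ne_atTop 0).mono fun r hr => hasDerivAt_bowlBarrier c ε hr) ?_ ?_
  · filter_upwards [hgap 0 (by positivity)] with r hr hvr
    rw [hvr]
    linarith
  · by_contra h
    rw [not_frequently] at h
    refine not_tendsto_atBot_of_hasDerivAt_nonneg
      (ψ := fun r => bowlBarrier c ε r - v r - ε / (2 * c) * Real.log r)
      (ψ' := fun r => 1 + c / r ^ 2 - 2 * ε / r ^ 3 - bowlRHS c r (v r) - ε / (2 * c) * r⁻¹)
      ?_ ?_ ?_
    · filter_upwards [hv, eventually_gt_atTop 0] with r hvr hr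
      exact ((hasDerivAt_bowlBarrier c ε hr.ne').sub hvr).sub
        ((Real.hasDerivAt_log hr.ne').const_mul _)
    · have hhalf : ε / (2 * c) < ε / c := div_lt_div_of_pos_left hε hc (by linarith)
      filter_upwards [h, hgap (ε / (2 * c)) hhalf,
        eventually_two_mul_div_three_le_bowlBarrier c ε, eventually_gt_atTop 0]
        with r hvr hgr hBr hr
      have hmono :=
        bowlRHS_antitoneOn hc hr hBr (hBr.trans (not_le.1 hvr).le) (not_le.1 hvr).le
      linarith
    · refine tendsto_atBot_mono' _ ?_
        (tendsto_neg_mul_log_atBot (by positivity : 0 < ε / (2 * c)))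
      filter_upwards [h] with r hvr
      linarith [not_le.1 hvr]

theorem eventually_bowlBarrier_neg_le (hc : 0 < c)
    (hv : ∀ᶠ r in atTop, HasDerivAt v (bowlRHS c r (v r)) r) {ε : ℝ} (hε : 0 < ε) :
    ∀ᶠ r in atTop, bowlBarrier c (-ε) r ≤ v r := by
  obtain ⟨ρ, hρ, hρeq⟩ := exists_bowlRHS_bowlBarrier_eq c (-ε) hc.ne'
  have hgap (α : ℝ) (hα : α < ε / c) : ∀ᶠ r in atTop,
      α * r⁻¹ < bowlRHS c r (bowlBarrier c (-ε) r) - (1 + c / r ^ 2 - 2 * -ε / r ^ 3) := by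
    have := eventually_pos_of_eq_mul_inv_add (sub_pos.2 hα)
      (P := fun y => ρ y - c - 2 * ε * y) (by fun_prop) (g := fun r =>
        bowlRHS c r (bowlBarrier c (-ε) r) - (1 + c / r ^ 2 - 2 * -ε / r ^ 3) - α * r⁻¹)
      (by filter_upwards [eventually_ne_atTop 0] with r hr; rw [hρeq r hr]; field_simp; ring)
    filter_upwards [this] with r hr
    linarith
  refine eventually_le_of_frequently_le
    ((eventually_ne_atTop 0).mono fun r hr => hasDerivAt_bowlBarrier c (-ε) hr) hv ?_ ?_
  · filter_upwards [hgap 0 (by positivity)] with r hr hvr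
    rw [← hvr]
    linarith
  · by_contra h
    rw [not_frequently] at h
    refine not_tendsto_atBot_of_hasDerivAt_nonneg
      (ψ := fun r => v r - bowlBarrier c (-ε) r - ε / (2 * c) * Real.log r)
      (ψ' := fun r =>
        bowlRHS c r (v r) - (1 + c / r ^ 2 - 2 * -ε / r ^ 3) - ε / (2 * c) * r⁻¹)
      ?_ ?_ ?_
    · filter_upwards [hv, eventually_gt_atTop 0] with r hvr hr
      exact (hvr.sub (hasDerivAt_bowlBarrier c (-ε) hr.ne')).sub
        ((Real.hasDerivAt_log hr.ne').const_mul _)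
    · have hhalf : ε / (2 * c) < ε / c := div_lt_div_of_pos_left hε hc (by linarith)
      filter_upwards [h, hgap (ε / (2 * c)) hhalf,
        eventually_two_mul_div_three_le hc hv, eventually_gt_atTop 0]
        with r hvr hgr hvr' hr
      have hmono :=
        bowlRHS_antitoneOn hc hr hvr' (hvr'.trans (not_le.1 hvr).le) (not_le.1 hvr).le
      linarith
    · refine tendsto_atBot_mono' _ ?_
        (tendsto_neg_mul_log_atBot (by positivity : 0 < ε / (2 * c)))
      filter_upwards [h] with r hvr
      linarith [not_le.1 hvr]

theorem isLittleO_sub_sub_div (hc : 0 < c)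
    (hv : ∀ᶠ r in atTop, HasDerivAt v (bowlRHS c r (v r)) r) :
    (fun r => v r - (r - c / r)) =o[atTop] fun r => (r ^ 2)⁻¹ := by
  refine isLittleO_iff.2 fun ε hε => ?_
  filter_upwards [eventually_le_bowlBarrier hc hv hε, eventually_bowlBarrier_neg_le hc hv hε,
    eventually_gt_atTop 0] with r hup hlow hr
  rw [Real.norm_eq_abs, Real.norm_eq_abs, abs_of_pos (a := (r ^ 2)⁻¹) (by positivity), abs_le]
  unfold bowlBarrier at hup hlow
  rw [neg_div] at hlow
  rw [← div_eq_mul_inv]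
  constructor <;> linarith

end BowlODE

theorem stmt10_general (f : ℝ × ℝ → ℝ)
    (hf : ContDiff ℝ 2 f)
    (hhom : ∀ c : ℝ, 0 < c → ∀ x y : ℝ, f (c * x, c * y) = c * f (x, y))
    (hfx : ∀ p : ℝ × ℝ, 0 < deriv (fun t => f (t, p.2)) p.1)
    (hnorm : f (0, 1) = 1)
    (c : ℝ) (hc : c = deriv (fun t => f (t, 1)) 0)
    (v dv : ℝ → ℝ)
    (hode : ∀ r : ℝ, 0 < r → HasDerivAt v (dv r) r ∧
      f (dv r / (1 + (v r) ^ 2), v r / r) = 1)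
    (u : ℝ → ℝ) (hu : ∀ r : ℝ, 0 < r → HasDerivAt u (v r) r) :
    (fun r : ℝ => v r - (r - c / r)) =o[atTop] (fun r : ℝ => (r ^ 2)⁻¹) ∧
    ∃ C : ℝ, (fun r : ℝ => u r - (r ^ 2 / 2 - c * Real.log r + C))
      =o[atTop] (fun r : ℝ => r⁻¹) := by
  have hcpos : 0 < c := hc ▸ hfx (0, 1)
  have hflin := eq_deriv_mul_add_of_homogeneous (hf.differentiable two_ne_zero 0) hhom hnorm
  have hv : ∀ᶠ r in atTop, HasDerivAt v (bowlRHS c r (v r)) r := by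
    filter_upwards [eventually_gt_atTop 0] with r hr
    obtain ⟨hder, heq⟩ := hode r hr
    rw [hflin, ← hc] at heq
    rwa [← eq_bowlRHS_of_mul_add_eq_one hcpos.ne' hr.ne' heq]
  have hslope := isLittleO_sub_sub_div hcpos hv
  have hheight : ∀ᶠ r in atTop, HasDerivAt (fun r => u r - (r ^ 2 / 2 - c * Real.log r))
      (v r - (r - c / r)) r := by
    filter_upwards [eventually_gt_atTop 0] with r hr
    refine ((hu r hr).sub (((hasDerivAt_pow 2 r).div_const 2).sub
      ((Real.hasDerivAt_log hr.ne').const_mul c))).congr_deriv ?_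
    field_simp
    ring
  obtain ⟨C, hC⟩ := exists_isLittleO_inv_sub_const hheight hslope
  exact ⟨hslope, C, hC.congr_left fun r => by ring⟩

/-- v(r) = r - c/r + o(r⁻²), and hence the height u with u' = v satisfies
u(r) = r²/2 - c log r + C + o(r⁻¹). -/
theorem stmt10 (f : ℝ × ℝ → ℝ)
    (hf : ContDiff ℝ 2 f)
    (hhom : ∀ c : ℝ, 0 < c → ∀ x y : ℝ, f (c * x, c * y) = c * f (x, y))
    (hfx : ∀ p : ℝ × ℝ, 0 < deriv (fun t => f (t, p.2)) p.1)
    (hfy : ∀ p : ℝ × ℝ, 0 < deriv (fun t => f (p.1, t)) p.2)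
    (hnorm : f (0, 1) = 1)
    (c : ℝ) (hc : c = deriv (fun t => f (t, 1)) 0)
    (v dv : ℝ → ℝ) (hv0 : v 0 = 0)
    (hvpos : ∀ r : ℝ, 0 < r → 0 < v r)
    (hode : ∀ r : ℝ, 0 < r → HasDerivAt v (dv r) r ∧
      f (dv r / (1 + (v r) ^ 2), v r / r) = 1)
    (u : ℝ → ℝ) (hu : ∀ r : ℝ, 0 < r → HasDerivAt u (v r) r) :
    (fun r : ℝ => v r - (r - c / r)) =o[atTop] (fun r : ℝ => (r ^ 2)⁻¹) ∧
    ∃ C : ℝ, (fun r : ℝ => u r - (r ^ 2 / 2 - c * Real.log r + C))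
      =o[atTop] (fun r : ℝ => r⁻¹) :=
  stmt10_general f hf hhom hfx hnorm c hc v dv hode u hu
end

section
/- For n ≥ 4, the function w(r) = ((n-2)/n)^{1/(n-2)} · r^{n/(n-2)} is a sub-solution of the ODE v' = (1+v²)(r/v)^{n-1} for all r > 0: w' ≤ (1+w²)(r/w)^{n-1}, with w' - (1+w²)(r/w)^{n-1} = -((n-2)/n)^{-(n-1)/(n-2)} r^{-2(n-1)/(n-2)} < 0. Consequently the solution with v(0)=0 satisfies v(r) ≥ w(r) for all r > 0. -/
/-!
`w` solves the truncated equation `w' = w² (r/w)^(n-1)` exactly (equivalently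
`w^(n-2) = (n-2)/n · rⁿ`), so its deficit in `v' = (1 + v²)(r/v)^(n-1)` is `-(r/w)^(n-1) < 0`.
Since `y ↦ (1 + y²)(r/y)^(n-1)` is strictly decreasing on `y > 0`, the difference `v - w`
increases wherever it is negative; as it starts at `0`, it never becomes negative.
-/

open Set

theorem nonneg_of_hasDerivAt_pos_of_neg {g g' : ℝ → ℝ} {a b : ℝ} (hab : a ≤ b)
    (hg : ContinuousOn g (Icc a b)) (hderiv : ∀ x ∈ Ioo a b, HasDerivAt g (g' x) x)
    (hpos : ∀ x ∈ Ioo a b, g x < 0 → 0 < g' x) (ha : 0 ≤ g a) : 0 ≤ g b := by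
  by_contra! hb
  set S := Icc a b ∩ g ⁻¹' Ici 0
  have hbdd : BddAbove S := ⟨b, fun x hx => hx.1.2⟩
  have ht : sSup S ∈ S :=
    (hg.preimage_isClosed_of_isClosed isClosed_Icc isClosed_Ici).csSup_mem
      ⟨a, left_mem_Icc.2 hab, ha⟩ hbdd
  set t := sSup S
  -- past the last point `t` where `g ≥ 0`, `g` is negative, hence increasing on `[t, b]`
  obtain ⟨⟨hat, htb⟩, hgt : 0 ≤ g t⟩ := ht
  have htb : t < b := htb.lt_of_ne fun h => hb.not_ge (h ▸ hgt)
  have hneg : ∀ x ∈ Ioc t b, g x < 0 := fun x hx => by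
    by_contra! h
    exact (le_csSup hbdd ⟨⟨hat.trans hx.1.le, hx.2⟩, h⟩).not_gt hx.1
  have hmono : StrictMonoOn g (Icc t b) := by
    refine strictMonoOn_of_deriv_pos (convex_Icc t b) (hg.mono (Icc_subset_Icc_left hat))
      fun x hx => ?_
    rw [interior_Icc] at hx
    have hxab : x ∈ Ioo a b := ⟨hat.trans_lt hx.1, hx.2⟩
    rw [(hderiv x hxab).deriv]
    exact hpos x hxab (hneg x (Ioo_subset_Ioc_self hx))
  exact hb.not_ge (hgt.trans (hmono (left_mem_Icc.2 htb.le) (right_mem_Icc.2 htb.le) htb).le)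

theorem le_of_subsolution_of_strictAntiOn {F : ℝ → ℝ → ℝ} {s : Set ℝ} {v w w' : ℝ → ℝ}
    {a b : ℝ} (hab : a ≤ b) (hv : ContinuousOn v (Icc a b))
    (hw : ContinuousOn w (Icc a b))
    (hv' : ∀ x ∈ Ioo a b, HasDerivAt v (F x (v x)) x)
    (hw' : ∀ x ∈ Ioo a b, HasDerivAt w (w' x) x) (hsub : ∀ x ∈ Ioo a b, w' x ≤ F x (w x))
    (hF : ∀ x ∈ Ioo a b, StrictAntiOn (F x) s) (hvs : ∀ x ∈ Ioo a b, v x ∈ s)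
    (hws : ∀ x ∈ Ioo a b, w x ∈ s) (ha : w a ≤ v a) : w b ≤ v b := by
  refine sub_nonneg.1 <| nonneg_of_hasDerivAt_pos_of_neg (g := v - w) hab (hv.sub hw)
    (fun x hx => (hv' x hx).sub (hw' x hx)) (fun x hx hneg => ?_) (sub_nonneg.2 ha)
  have hF_lt : F x (w x) < F x (v x) := hF x hx (hvs x hx) (hws x hx) (sub_neg.1 hneg)
  linarith [hsub x hx]

theorem strictAntiOn_one_add_sq_mul_div_pow {r : ℝ} (hr : 0 < r) {m : ℕ} (hm : 2 ≤ m) :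
    StrictAntiOn (fun y : ℝ => (1 + y ^ 2) * (r / y) ^ m) (Ioi 0) := by
  intro a (ha : 0 < a) b (hb : 0 < b) hab
  obtain ⟨k, rfl⟩ : ∃ k, m = k + 2 := ⟨m - 2, by omega⟩
  have hrba : r / b < r / a := div_lt_div_of_pos_left hr ha hab
  have hsq : ∀ y ≠ 0, y ^ 2 * (r / y) ^ (k + 2) = r ^ 2 * (r / y) ^ k := fun y hy => by
    rw [div_pow, div_pow]
    field_simp
    ring
  have h1 : (r / b) ^ (k + 2) < (r / a) ^ (k + 2) :=
    pow_lt_pow_left₀ hrba (by positivity) (by omega)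
  have h2 : (r / b) ^ k ≤ (r / a) ^ k := pow_le_pow_left₀ (by positivity) hrba.le k
  simp only [add_mul, one_mul, hsq a ha.ne', hsq b hb.ne']
  nlinarith [sq_nonneg r]

noncomputable def barrier (n : ℕ) (r : ℝ) : ℝ :=
  (((n : ℝ) - 2) / n) ^ ((1 : ℝ) / ((n : ℝ) - 2)) * r ^ ((n : ℝ) / ((n : ℝ) - 2))

noncomputable def barrierDeriv (n : ℕ) (r : ℝ) : ℝ :=
  (((n : ℝ) - 2) / n) ^ ((1 : ℝ) / ((n : ℝ) - 2)) * ((n : ℝ) / ((n : ℝ) - 2))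
    * r ^ ((n : ℝ) / ((n : ℝ) - 2) - 1)

theorem hasDerivAt_barrier (n : ℕ) {r : ℝ} (hr : r ≠ 0) :
    HasDerivAt (barrier n) (barrierDeriv n r) r := by
  rw [barrierDeriv, mul_assoc]
  exact (Real.hasDerivAt_rpow_const (Or.inl hr)).const_mul _

theorem continuous_barrier {n : ℕ} (hn : 2 ≤ n) : Continuous (barrier n) := by
  have hexp : (0 : ℝ) ≤ n / (n - 2) :=
    div_nonneg (by positivity) (sub_nonneg.2 (by exact_mod_cast hn))
  exact continuous_const.mul (continuous_id.rpow_const fun _ => Or.inr hexp)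

theorem barrier_zero {n : ℕ} (hn : 2 < n) : barrier n 0 = 0 := by
  have h2 : (2 : ℝ) < n := by exact_mod_cast hn
  rw [barrier, Real.zero_rpow (div_pos (by linarith) (by linarith)).ne', mul_zero]

theorem barrier_pos {n : ℕ} (hn : 2 < n) {r : ℝ} (hr : 0 < r) : 0 < barrier n r := by
  have h2 : (2 : ℝ) < n := by exact_mod_cast hn
  have hb : 0 < ((n : ℝ) - 2) / n := div_pos (by linarith) (by linarith)
  unfold barrier
  positivity

theorem barrierDeriv_eq {n : ℕ} {r : ℝ} (hr : r ≠ 0) :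
    barrierDeriv n r = n / (n - 2) * barrier n r / r := by
  rw [barrierDeriv, barrier, Real.rpow_sub_one hr]
  ring

theorem barrier_pow_sub_two {n : ℕ} (hn : 2 < n) {r : ℝ} (hr : 0 ≤ r) :
    barrier n r ^ (n - 2) = (n - 2) / n * r ^ n := by
  have h2 : (2 : ℝ) < n := by exact_mod_cast hn
  have hb : 0 ≤ ((n : ℝ) - 2) / n := div_nonneg (by linarith) (by linarith)
  have hn2 : (n : ℝ) - 2 ≠ 0 := by linarith
  have hexp₁ : 1 / ((n : ℝ) - 2) * (n - 2) = 1 := by field_simp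
  have hexp₂ : n / ((n : ℝ) - 2) * (n - 2) = n := by field_simp
  rw [barrier, mul_pow, ← Real.rpow_natCast, ← Real.rpow_mul hb, ← Real.rpow_natCast (r ^ _),
    ← Real.rpow_mul hr, Nat.cast_sub hn.le, Nat.cast_ofNat, hexp₁, hexp₂, Real.rpow_one,
    Real.rpow_natCast]

theorem div_barrier_pow {n : ℕ} (hn : 2 < n) {r : ℝ} (hr : 0 < r) :
    (r / barrier n r) ^ (n - 1) = n / (n - 2) / (r * barrier n r) := by
  have hw := barrier_pow_sub_two hn hr.le
  have hw_pos := barrier_pos hn hr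
  obtain ⟨k, rfl⟩ : ∃ k, n = k + 3 := ⟨n - 3, by omega⟩
  simp only [show k + 3 - 1 = k + 2 by omega, show k + 3 - 2 = k + 1 by omega] at hw ⊢
  push_cast at hw ⊢
  rw [div_pow, pow_succ (barrier _ r), hw]
  field_simp
  ring

theorem barrierDeriv_eq_sq_mul_div_pow {n : ℕ} (hn : 2 < n) {r : ℝ} (hr : 0 < r) :
    barrierDeriv n r = barrier n r ^ 2 * (r / barrier n r) ^ (n - 1) := by
  have hw_pos := barrier_pos hn hr
  rw [barrierDeriv_eq hr.ne', div_barrier_pow hn hr]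
  field_simp

theorem div_barrier_pow_eq_rpow {n : ℕ} (hn : 2 < n) {r : ℝ} (hr : 0 < r) :
    (r / barrier n r) ^ (n - 1) = (((n : ℝ) - 2) / n) ^ (-(((n : ℝ) - 1) / ((n : ℝ) - 2)))
      * r ^ (-(2 * ((n : ℝ) - 1) / ((n : ℝ) - 2))) := by
  have h2 : (2 : ℝ) < n := by exact_mod_cast hn
  have hn2 : (n : ℝ) - 2 ≠ 0 := by linarith
  have hb : 0 < ((n : ℝ) - 2) / n := div_pos (by linarith) (by linarith)
  have hexp₁ : -(((n : ℝ) - 1) / (n - 2)) = -1 + -(1 / (n - 2)) := by field_simp; ring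
  have hexp₂ : -(2 * ((n : ℝ) - 1) / (n - 2)) = -(1 + n / (n - 2)) := by field_simp; ring
  rw [div_barrier_pow hn hr, hexp₁, hexp₂, Real.rpow_add hb, Real.rpow_neg_one,
    Real.rpow_neg hb.le, Real.rpow_neg hr.le, Real.rpow_add hr, Real.rpow_one, inv_div, barrier]
  field_simp

/-- For n ≥ 4, w(r) = ((n-2)/n)^{1/(n-2)} r^{n/(n-2)} is a sub-solution of
v' = (1+v²)(r/v)^{n-1}, with the exact deficit
w' - (1+w²)(r/w)^{n-1} = -((n-2)/n)^{-(n-1)/(n-2)} r^{-2(n-1)/(n-2)} < 0,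
and consequently the solution with v(0) = 0 satisfies v ≥ w on (0,∞). -/
theorem stmt14 (n : ℕ) (hn : 4 ≤ n)
    (w dw : ℝ → ℝ)
    (hw : ∀ r : ℝ, w r =
      (((n : ℝ) - 2) / n) ^ ((1 : ℝ) / ((n : ℝ) - 2)) * r ^ ((n : ℝ) / ((n : ℝ) - 2)))
    (hdw : ∀ r : ℝ, dw r =
      (((n : ℝ) - 2) / n) ^ ((1 : ℝ) / ((n : ℝ) - 2))
        * ((n : ℝ) / ((n : ℝ) - 2)) * r ^ ((n : ℝ) / ((n : ℝ) - 2) - 1))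
    (v : ℝ → ℝ) (hv0 : v 0 = 0)
    (hcont : ContinuousOn v (Set.Ici 0))
    (hvpos : ∀ r : ℝ, 0 < r → 0 < v r)
    (hode : ∀ r : ℝ, 0 < r → HasDerivAt v ((1 + (v r) ^ 2) * (r / v r) ^ (n - 1)) r) :
    (∀ r : ℝ, 0 < r → HasDerivAt w (dw r) r) ∧
    (∀ r : ℝ, 0 < r →
      dw r - (1 + (w r) ^ 2) * (r / w r) ^ (n - 1)
        = -((((n : ℝ) - 2) / n) ^ (-(((n : ℝ) - 1) / ((n : ℝ) - 2))))
            * r ^ (-(2 * ((n : ℝ) - 1) / ((n : ℝ) - 2))) ∧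
      dw r ≤ (1 + (w r) ^ 2) * (r / w r) ^ (n - 1)) ∧
    (∀ r : ℝ, 0 < r → w r ≤ v r) := by
  have hn2 : 2 < n := by omega
  obtain rfl : w = barrier n := funext hw
  obtain rfl : dw = barrierDeriv n := funext hdw
  have hdeficit : ∀ r, 0 < r →
      barrierDeriv n r - (1 + barrier n r ^ 2) * (r / barrier n r) ^ (n - 1)
        = -(r / barrier n r) ^ (n - 1) := fun r hr => by
    rw [barrierDeriv_eq_sq_mul_div_pow hn2 hr]
    ring
  have hsub : ∀ r, 0 < r →
      barrierDeriv n r ≤ (1 + barrier n r ^ 2) * (r / barrier n r) ^ (n - 1) := fun r hr => by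
    have hw_pos := barrier_pos hn2 hr
    rw [← sub_nonpos, hdeficit r hr, neg_nonpos]
    positivity
  refine ⟨fun r hr => hasDerivAt_barrier n hr.ne',
    fun r hr => ⟨by rw [hdeficit r hr, div_barrier_pow_eq_rpow hn2 hr, neg_mul], hsub r hr⟩,
    fun r hr => ?_⟩
  exact le_of_subsolution_of_strictAntiOn hr.le (hcont.mono Icc_subset_Ici_self)
    (continuous_barrier hn2.le).continuousOn (fun x hx => hode x hx.1)
    (fun x hx => hasDerivAt_barrier n hx.1.ne') (fun x hx => hsub x hx.1)
    (fun x hx => strictAntiOn_one_add_sq_mul_div_pow hx.1 (by omega))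
    (fun x hx => hvpos x hx.1) (fun x hx => barrier_pos hn2 hx.1) (by rw [barrier_zero hn2, hv0])
end

section
/- Let a = (n-k)/k with 1 ≤ k < n, and let ε, C > 0. Then w(r) = -C·r^{-(1+ε)a} is a super-solution, for sufficiently large r, of the ODE v' = ((n-k)/(k+1))(1+v²)(v/r)·((k+1) - (n-k-1)v/r)/((n-k)v/r - k) in the regime v < 0. Consequently, the negative increasing solution v of this ODE (the lower wing branch of the Q_{k+1,k}-translator) cannot decay to 0 faster than -r^{-(n-k)(1+ε)/k} for any ε > 0. -/
open Filter

lemma stmt16_key (m K ε : ℝ) (hm : 1 ≤ m) (hK : 1 ≤ K) (hε : 0 < ε) :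
    ∃ δ : ℝ, 0 < δ ∧ δ ≤ 1 ∧ ∀ w y : ℝ, -δ ≤ w → w ≤ 0 → -δ ≤ y → y < 0 →
      (1 + w ^ 2) * (m / (K + 1) * y * ((K + 1) - (m - 1) * y) / (m * y - K))
        < (1 + ε) * (m / K) * (-y) := by
  refine ⟨min 1 (ε * (K + 1) / (2 * m + K)), ?_, min_le_left _ _, ?_⟩
  · exact lt_min one_pos (by positivity)
  · intro w y hw1 hw2 hy1 hy2
    set δ := min 1 (ε * (K + 1) / (2 * m + K)) with hδdef
    have hδpos : 0 < δ := lt_min one_pos (by positivity)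
    have hδ1 : δ ≤ 1 := min_le_left _ _
    have hδ2 : δ * (2 * m + K) ≤ ε * (K + 1) := by
      have h := min_le_right 1 (ε * (K + 1) / (2 * m + K))
      calc δ * (2 * m + K) ≤ ε * (K + 1) / (2 * m + K) * (2 * m + K) :=
            mul_le_mul_of_nonneg_right h (by linarith)
        _ = ε * (K + 1) := by field_simp
    have hK0 : (0:ℝ) < K := by linarith
    have hK1 : (0:ℝ) < K + 1 := by linarith
    have hD : m * y - K < 0 := by nlinarith
    have hN : 0 < (K + 1) - (m - 1) * y := by nlinarith
    have h3 : 1 + w ^ 2 ≤ 1 + δ ^ 2 := by nlinarith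
    have h4 : (K + 1) - (m - 1) * y ≤ (K + 1) + (m - 1) * δ := by nlinarith
    have hd2 : δ ^ 2 ≤ δ := by nlinarith
    have hd3 : δ ^ 3 ≤ δ := by nlinarith
    have h6 : (1 + δ ^ 2) * ((K + 1) + (m - 1) * δ) < (1 + ε) * (K + 1) := by nlinarith
    have h7 : (1 + w ^ 2) * ((K + 1) - (m - 1) * y) ≤ (1 + δ ^ 2) * ((K + 1) + (m - 1) * δ) :=
      mul_le_mul h3 h4 hN.le (by positivity)
    have hint : (1 + w ^ 2) * ((K + 1) - (m - 1) * y) * K < (1 + ε) * (K + 1) * (K - m * y) :=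
      calc (1 + w ^ 2) * ((K + 1) - (m - 1) * y) * K
          ≤ (1 + δ ^ 2) * ((K + 1) + (m - 1) * δ) * K := mul_le_mul_of_nonneg_right h7 hK0.le
        _ < (1 + ε) * (K + 1) * K := mul_lt_mul_of_pos_right h6 hK0
        _ ≤ (1 + ε) * (K + 1) * (K - m * y) :=
            mul_le_mul_of_nonneg_left (by nlinarith) (by positivity)
    have hmy : 0 < m * (-y) := by nlinarith
    have hbig := mul_lt_mul_of_pos_left hint hmy
    have h1 : (1 + w ^ 2) * (m / (K + 1) * y * ((K + 1) - (m - 1) * y) / (m * y - K))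
        = ((1 + w ^ 2) * (m / (K + 1) * y * ((K + 1) - (m - 1) * y))) / (m * y - K) := by
      ring
    rw [h1, div_lt_iff_of_neg hD]
    have h2 : (1 + w ^ 2) * (m / (K + 1) * y * ((K + 1) - (m - 1) * y))
        = ((1 + w ^ 2) * (m * y * ((K + 1) - (m - 1) * y))) / (K + 1) := by ring
    rw [h2, lt_div_iff₀ hK1]
    have h8 : (1 + ε) * (m / K) * (-y) * (m * y - K) * (K + 1)
        = ((1 + ε) * m * (-y) * (m * y - K) * (K + 1)) / K := by ring
    rw [h8, div_lt_iff₀ hK0]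
    linarith [hbig]

/-- w(r) = -C r^{-(1+ε)a}, a = (n-k)/k, is eventually a super-solution of the
lower-wing Q_{k+1,k} ODE; consequently the negative increasing solution v stays
below -C r^{-(1+ε)a} for some C > 0, so it cannot decay to 0 faster than that rate. -/
theorem stmt16 (n k : ℕ) (hk : 1 ≤ k) (hkn : k < n)
    (a : ℝ) (ha : a = ((n : ℝ) - k) / k)
    (g : ℝ → ℝ)
    (hg : ∀ y : ℝ, g y = ((n : ℝ) - k) / ((k : ℝ) + 1) * y
      * (((k : ℝ) + 1) - ((n : ℝ) - k - 1) * y) / (((n : ℝ) - k) * y - k))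
    (ε : ℝ) (hε : 0 < ε) :
    (∀ C : ℝ, 0 < C → ∀ᶠ r in atTop,
      (1 + (-C * r ^ (-(1 + ε) * a)) ^ 2) * g ((-C * r ^ (-(1 + ε) * a)) / r)
        ≤ C * (1 + ε) * a * r ^ (-(1 + ε) * a - 1)) ∧
    (∀ (r₀ : ℝ) (v : ℝ → ℝ), 0 < r₀ →
      (∀ r : ℝ, r₀ ≤ r → HasDerivAt v ((1 + (v r) ^ 2) * g (v r / r)) r) →
      (∀ r : ℝ, r₀ ≤ r → v r < 0) →
      StrictMonoOn v (Set.Ici r₀) →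
      ∃ C : ℝ, 0 < C ∧ ∃ R : ℝ, ∀ r : ℝ, R ≤ r → v r ≤ -C * r ^ (-(1 + ε) * a)) := by
  have hK1 : (1:ℝ) ≤ (k:ℝ) := by exact_mod_cast hk
  have hm1 : (1:ℝ) ≤ (n:ℝ) - k := by
    have : (k:ℝ) + 1 ≤ (n:ℝ) := by exact_mod_cast hkn
    linarith
  obtain ⟨δ, hδpos, hδ1, hkey⟩ := stmt16_key ((n:ℝ) - k) (k:ℝ) ε hm1 hK1 hε
  have hapos : 0 < a := by rw [ha]; positivity
  set b : ℝ := (1 + ε) * a with hb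
  have hbpos : 0 < b := by positivity
  have hexp : -(1 + ε) * a = -b := by rw [hb]; ring
  -- the strict super-solution property
  have hsuper : ∀ C r : ℝ, 0 < C → 0 < r → C * r ^ (-b) ≤ δ → C * r ^ (-b - 1) ≤ δ →
      (1 + (-C * r ^ (-b)) ^ 2) * g ((-C * r ^ (-b)) / r) < C * (1 + ε) * a * r ^ (-b - 1) := by
    intro C r hC hr h1 h2
    have hy : (-C * r ^ (-b)) / r = -(C * r ^ (-b - 1)) := by
      rw [Real.rpow_sub hr, Real.rpow_one]
      field_simp
    have hrb : 0 < r ^ (-b) := Real.rpow_pos_of_pos hr _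
    have hrb1 : 0 < r ^ (-b - 1) := Real.rpow_pos_of_pos hr _
    have := hkey (-C * r ^ (-b)) (-(C * r ^ (-b - 1)))
      (by nlinarith) (by nlinarith) (by nlinarith) (by nlinarith)
    rw [hy, hg]
    calc (1 + (-C * r ^ (-b)) ^ 2) *
          (((n:ℝ) - k) / ((k:ℝ) + 1) * (-(C * r ^ (-b - 1)))
            * (((k:ℝ) + 1) - ((n:ℝ) - k - 1) * (-(C * r ^ (-b - 1))))
            / (((n:ℝ) - k) * (-(C * r ^ (-b - 1))) - k))
        < (1 + ε) * (((n:ℝ) - k) / k) * (-(-(C * r ^ (-b - 1)))) := this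
      _ = C * (1 + ε) * (((n:ℝ) - k) / k) * r ^ (-b - 1) := by ring
      _ = C * (1 + ε) * a * r ^ (-b - 1) := by rw [ha]
  constructor
  · -- Part 1
    intro C hC
    have t0 : ∀ᶠ r : ℝ in atTop, 0 < r := eventually_gt_atTop 0
    have tb : Tendsto (fun r : ℝ => C * r ^ (-b)) atTop (nhds 0) := by
      simpa using (tendsto_rpow_neg_atTop hbpos).const_mul C
    have tb1 : Tendsto (fun r : ℝ => C * r ^ (-b - 1)) atTop (nhds 0) := by
      have := (tendsto_rpow_neg_atTop (by linarith : (0:ℝ) < b + 1)).const_mul C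
      simpa [show -(b + 1) = -b - 1 by ring] using this
    have t1 : ∀ᶠ r : ℝ in atTop, C * r ^ (-b) ≤ δ := tb.eventually (eventually_le_nhds hδpos)
    have t2 : ∀ᶠ r : ℝ in atTop, C * r ^ (-b - 1) ≤ δ := tb1.eventually (eventually_le_nhds hδpos)
    filter_upwards [t0, t1, t2] with r hr h1 h2
    rw [hexp]
    exact (hsuper C r hC hr h1 h2).le
  · -- Part 2
    intro r₀ v hr₀ hderiv hneg hmono
    -- choose a threshold beyond which r^(-b) ≤ δ etc.
    have hev : ∀ᶠ r : ℝ in atTop, r ^ (-b) ≤ δ ∧ r ^ (-b - 1) ≤ δ ∧ 0 < r := by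
      have tb : Tendsto (fun r : ℝ => r ^ (-b)) atTop (nhds 0) := tendsto_rpow_neg_atTop hbpos
      have tb1 : Tendsto (fun r : ℝ => r ^ (-b - 1)) atTop (nhds 0) := by
        have := tendsto_rpow_neg_atTop (by linarith : (0:ℝ) < b + 1)
        simpa [show -(b + 1) = -b - 1 by ring] using this
      exact (tb.eventually (eventually_le_nhds hδpos)).and
        ((tb1.eventually (eventually_le_nhds hδpos)).and (eventually_gt_atTop 0))
    obtain ⟨R₂, hR₂⟩ := eventually_atTop.mp hev
    set R₁ : ℝ := max r₀ R₂ with hR₁def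
    have hR₁r₀ : r₀ ≤ R₁ := le_max_left _ _
    have hR₁pos : 0 < R₁ := lt_of_lt_of_le hr₀ hR₁r₀
    have hRfacts : ∀ r : ℝ, R₁ ≤ r → r ^ (-b) ≤ δ ∧ r ^ (-b - 1) ≤ δ ∧ 0 < r :=
      fun r hr => hR₂ r (le_trans (le_max_right _ _) hr)
    have hvR₁ : v R₁ < 0 := hneg R₁ hR₁r₀
    set C : ℝ := min 1 ((-v R₁) * R₁ ^ b) with hCdef
    have hRb : (0:ℝ) < R₁ ^ b := Real.rpow_pos_of_pos hR₁pos _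
    have hC : 0 < C := lt_min one_pos (by nlinarith)
    have hC1 : C ≤ 1 := min_le_left _ _
    have hC2 : C ≤ (-v R₁) * R₁ ^ b := min_le_right _ _
    -- initial comparison at R₁
    have hcancel : R₁ ^ b * R₁ ^ (-b) = 1 := by
      rw [← Real.rpow_add hR₁pos]; simp
    have hRmb : (0:ℝ) < R₁ ^ (-b) := Real.rpow_pos_of_pos hR₁pos _
    have hinit : v R₁ ≤ -C * R₁ ^ (-b) := by
      have := mul_le_mul_of_nonneg_right hC2 hRmb.le
      nlinarith
    refine ⟨C, hC, R₁, ?_⟩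
    intro r hr
    rw [hexp]
    by_contra hcon
    push_neg at hcon
    -- notation
    set w : ℝ → ℝ := fun t => -C * t ^ (-b) with hwdef
    have hwcont : ∀ t : ℝ, 0 < t → ContinuousAt w t := fun t ht =>
      continuousAt_const.mul (Real.continuousAt_rpow_const t (-b) (Or.inl ht.ne'))
    have hwderiv : ∀ t : ℝ, 0 < t → HasDerivAt w (C * b * t ^ (-b - 1)) t := by
      intro t ht
      have := (Real.hasDerivAt_rpow_const (p := -b) (Or.inl ht.ne')).const_mul (-C)
      exact this.congr_deriv (by ring)
    have hhcont : ContinuousOn (fun t => v t - w t) (Set.Icc R₁ r) := by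
      intro t ht
      exact ((hderiv t (le_trans hR₁r₀ ht.1)).continuousAt.sub
        (hwcont t (lt_of_lt_of_le hR₁pos ht.1))).continuousWithinAt
    set S : Set ℝ := Set.Icc R₁ r ∩ (fun t => v t - w t) ⁻¹' Set.Iic 0 with hSdef
    have hScl : IsClosed S := hhcont.preimage_isClosed_of_isClosed isClosed_Icc isClosed_Iic
    have hSne : S.Nonempty := by
      refine ⟨R₁, ⟨le_rfl, hr⟩, ?_⟩
      simp only [Set.mem_preimage, Set.mem_Iic, hwdef]
      linarith
    have hSbdd : BddAbove S := ⟨r, fun x hx => hx.1.2⟩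
    set s : ℝ := sSup S with hsdef
    have hsS : s ∈ S := hScl.csSup_mem hSne hSbdd
    have hsIcc : s ∈ Set.Icc R₁ r := hsS.1
    have hsle : v s - w s ≤ 0 := hsS.2
    have hsr : s < r := by
      rcases lt_or_eq_of_le hsIcc.2 with h | h
      · exact h
      · exfalso
        rw [h] at hsle
        simp only [hwdef] at hsle
        linarith
    have hspos : 0 < s := lt_of_lt_of_le hR₁pos hsIcc.1
    have hsr₀ : r₀ ≤ s := le_trans hR₁r₀ hsIcc.1
    have hgt : ∀ t : ℝ, s < t → t ≤ r → 0 < v t - w t := by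
      intro t hst htr
      by_contra h
      push_neg at h
      have htS : t ∈ S := ⟨⟨le_trans hsIcc.1 hst.le, htr⟩, h⟩
      exact absurd (le_csSup hSbdd htS) (not_le.mpr hst)
    -- v s = w s
    have hsge : 0 ≤ v s - w s := by
      have hcont : ContinuousAt (fun t => v t - w t) s :=
        (hderiv s hsr₀).continuousAt.sub (hwcont s hspos)
      have htend : Tendsto (fun t => v t - w t) (nhdsWithin s (Set.Ioi s))
          (nhds (v s - w s)) := hcont.continuousWithinAt.tendsto
      refine ge_of_tendsto htend ?_
      filter_upwards [Ioc_mem_nhdsGT_of_mem (Set.mem_Ico.mpr ⟨le_rfl, hsr⟩)] with t ht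
      exact (hgt t ht.1 ht.2).le
    have hvw : v s = w s := by linarith
    -- strict supersolution at s gives negative derivative of the difference
    have hfacts := hRfacts s hsIcc.1
    have hCs1 : C * s ^ (-b) ≤ δ :=
      calc C * s ^ (-b) ≤ 1 * s ^ (-b) :=
            mul_le_mul_of_nonneg_right hC1 (Real.rpow_pos_of_pos hspos _).le
        _ = s ^ (-b) := one_mul _
        _ ≤ δ := hfacts.1
    have hCs2 : C * s ^ (-b - 1) ≤ δ :=
      calc C * s ^ (-b - 1) ≤ 1 * s ^ (-b - 1) :=
            mul_le_mul_of_nonneg_right hC1 (Real.rpow_pos_of_pos hspos _).le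
        _ = s ^ (-b - 1) := one_mul _
        _ ≤ δ := hfacts.2.1
    have hslt : (1 + (v s) ^ 2) * g (v s / s) < C * b * s ^ (-b - 1) := by
      rw [hvw]
      have := hsuper C s hC hspos hCs1 hCs2
      calc (1 + (w s) ^ 2) * g (w s / s)
          < C * (1 + ε) * a * s ^ (-b - 1) := this
        _ = C * b * s ^ (-b - 1) := by rw [hb]; ring
    have hh' : HasDerivAt (fun t => v t - w t)
        ((1 + (v s) ^ 2) * g (v s / s) - C * b * s ^ (-b - 1)) s :=
      (hderiv s hsr₀).sub (hwderiv s hspos)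
    have hd_neg : (1 + (v s) ^ 2) * g (v s / s) - C * b * s ^ (-b - 1) < 0 := by linarith
    -- slope argument: the difference decreases just after s, contradiction
    have hslope := hasDerivAt_iff_tendsto_slope.mp hh'
    have hslope' : Tendsto (slope (fun t => v t - w t) s) (nhdsWithin s (Set.Ioi s))
        (nhds ((1 + (v s) ^ 2) * g (v s / s) - C * b * s ^ (-b - 1))) :=
      hslope.mono_left (nhdsWithin_mono s (fun x hx => ne_of_gt hx))
    have hev2 : ∀ᶠ t in nhdsWithin s (Set.Ioi s),
        slope (fun t => v t - w t) s t < 0 := hslope'.eventually_lt_const hd_neg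
    have hev3 : ∀ᶠ t in nhdsWithin s (Set.Ioi s), t ∈ Set.Ioc s r :=
      Ioc_mem_nhdsGT_of_mem (Set.mem_Ico.mpr ⟨le_rfl, hsr⟩)
    have : NeBot (nhdsWithin s (Set.Ioi s)) := nhdsGT_neBot s
    obtain ⟨t, ht1, ht2⟩ := (hev2.and hev3).exists
    have hts : 0 < t - s := by linarith [ht2.1]
    have hslope_val : slope (fun t => v t - w t) s t
        = ((v t - w t) - (v s - w s)) / (t - s) := by
      simp [slope_def_field]
    rw [hslope_val] at ht1
    have hhs0 : v s - w s = 0 := by linarith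
    rw [hhs0, sub_zero] at ht1
    have : v t - w t < 0 := by
      have := (div_lt_iff₀ hts).mp ht1
      linarith
    exact absurd this (not_lt.mpr (hgt t ht2.1 ht2.2).le)
end

section
/- Let v solve v' = (1+v²)g(v/r) on [r₀,∞) with v(r₀) < 0, where g(y) = ((n-k)/(k+1))·y·((k+1)-(n-k-1)y)/((n-k)y-k) and 1 ≤ k < n-1. Then v is increasing, v(r) < 0 for all r ≥ r₀, and v(r) → 0 as r → ∞. -/
/-!
For `y ≤ 0` one has `g y = (a + n / ((k+1) (k - (n-k) y))) (-y)` with `a = (n-k-1)/(k+1) > 0`,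
so `g` is squeezed between two linear functions, `a (-y) ≤ g y ≤ C (-y)`. The upper bound gives
`v' ≤ K (-v)` as long as `v ≤ 0` stays bounded, so by Grönwall `v` cannot reach `0` in finite
time; then `v' > 0`.
Finally, if `v` stayed below some `b < 0`, the lower bound would give `v' ≥ a (-b) / r`, so `v`
would grow like `a (-b) log r` and become positive.
-/

open Filter Set Topology

noncomputable def wingRhs (N K y : ℝ) : ℝ :=
  (N - K) / (K + 1) * y * ((K + 1) - (N - K - 1) * y) / ((N - K) * y - K)

section WingRhs

variable {N K y : ℝ}

theorem wingRhs_eq (hK : 0 < K) (hKN : K < N) (hy : y ≤ 0) :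
    wingRhs N K y = ((N - K - 1) / (K + 1) + N / ((K + 1) * (K - (N - K) * y))) * -y := by
  have hden : K - (N - K) * y ≠ 0 := by nlinarith
  have hden' : (N - K) * y - K ≠ 0 := by nlinarith
  unfold wingRhs
  field_simp
  ring

theorem mul_neg_le_wingRhs (hK : 0 < K) (hKN : K < N) (hy : y ≤ 0) :
    (N - K - 1) / (K + 1) * -y ≤ wingRhs N K y := by
  have : 0 ≤ N / ((K + 1) * (K - (N - K) * y)) :=
    div_nonneg (by linarith) (mul_nonneg (by linarith) (by nlinarith))
  rw [wingRhs_eq hK hKN hy]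
  exact mul_le_mul_of_nonneg_right (le_add_of_nonneg_right this) (by linarith)

theorem wingRhs_le_mul_neg (hK : 0 < K) (hKN : K < N) (hy : y ≤ 0) :
    wingRhs N K y ≤ ((N - K - 1) / (K + 1) + N / ((K + 1) * K)) * -y := by
  rw [wingRhs_eq hK hKN hy]
  gcongr <;> nlinarith

end WingRhs

theorem ContinuousOn.exists_first_nonneg {f : ℝ → ℝ} {a b : ℝ} (hab : a ≤ b)
    (hf : ContinuousOn f (Icc a b)) (ha : f a < 0) (hb : 0 ≤ f b) :
    ∃ c ∈ Ioc a b, 0 ≤ f c ∧ ∀ x ∈ Ico a c, f x < 0 := by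
  have hS : IsCompact (Icc a b ∩ f ⁻¹' Ici 0) := isCompact_Icc.of_isClosed_subset
    (hf.preimage_isClosed_of_isClosed isClosed_Icc isClosed_Ici) inter_subset_left
  obtain ⟨c, ⟨hc, hfc⟩, hleast⟩ := hS.exists_isLeast ⟨b, ⟨hab, le_rfl⟩, hb⟩
  have hac : a ≠ c := by rintro rfl; exact absurd hfc (not_le.2 ha)
  refine ⟨c, ⟨lt_of_le_of_ne hc.1 hac, hc.2⟩, hfc, fun x hx => ?_⟩
  by_contra! hfx
  exact absurd (hleast ⟨⟨hx.1, hx.2.le.trans hc.2⟩, hfx⟩) (not_le.2 hx.2)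

theorem tendsto_atTop_of_hasDerivAt_ge_div {f f' : ℝ → ℝ} {c R : ℝ} (hc : 0 < c) (hR : 0 < R)
    (hf : ∀ x, R ≤ x → HasDerivAt f (f' x) x) (hf' : ∀ x, R ≤ x → c / x ≤ f' x) :
    Tendsto f atTop atTop := by
  have hderiv : ∀ x, R ≤ x → HasDerivAt (fun x => f x - c * Real.log x) (f' x - c / x) x :=
    fun x hx => by
      simpa only [div_eq_mul_inv] using
        (hf x hx).fun_sub ((Real.hasDerivAt_log (hR.trans_le hx).ne').const_mul c)
  have hmono : MonotoneOn (fun x => f x - c * Real.log x) (Ici R) := by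
    refine monotoneOn_of_hasDerivWithinAt_nonneg (convex_Ici R)
      (fun x hx => (hderiv x hx).continuousAt.continuousWithinAt)
      (fun x hx => (hderiv x (interior_subset hx)).hasDerivWithinAt) fun x hx => ?_
    exact sub_nonneg.2 (hf' x (interior_subset hx))
  refine tendsto_atTop_mono' atTop ?_
    ((Real.tendsto_log_atTop.const_mul_atTop hc).atTop_add
      (tendsto_const_nhds (x := f R - c * Real.log R)))
  filter_upwards [eventually_ge_atTop R] with x hx
  have : f R - c * Real.log R ≤ f x - c * Real.log x := hmono self_mem_Ici hx hx
  linarith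

def IsWingSolution (g : ℝ → ℝ) (r₀ : ℝ) (v : ℝ → ℝ) : Prop :=
  ∀ r : ℝ, r₀ ≤ r → HasDerivAt v ((1 + (v r) ^ 2) * g (v r / r)) r

namespace IsWingSolution

variable {g v : ℝ → ℝ} {r₀ : ℝ}

theorem continuousOn (hv : IsWingSolution g r₀ v) : ContinuousOn v (Ici r₀) :=
  fun r hr => (hv r hr).continuousAt.continuousWithinAt

theorem lt_zero {C : ℝ} (hv : IsWingSolution g r₀ v) (hr₀ : 0 < r₀) (hv₀ : v r₀ < 0)
    (hup : ∀ y ≤ 0, g y ≤ C * -y) : ∀ r, r₀ ≤ r → v r < 0 := by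
  intro r₂ hr₂
  by_contra! hv₂
  obtain ⟨r₁, ⟨hr₀₁, -⟩, hv₁, hneg⟩ :=
    (hv.continuousOn.mono Icc_subset_Ici_self).exists_first_nonneg hr₂ hv₀ hv₂
  have hcont : ContinuousOn v (Icc r₀ r₁) := hv.continuousOn.mono Icc_subset_Ici_self
  obtain ⟨M, hM⟩ := isCompact_Icc.exists_bound_of_continuousOn hcont
  set K := (1 + M ^ 2) * max C 0 / r₀
  -- `v' ≤ K (-v)`, in the shape `f' ≤ K f + ε` of Grönwall's inequality
  have hbound : ∀ x ∈ Ico r₀ r₁, (1 + v x ^ 2) * g (v x / x) ≤ -K * v x + 0 := by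
    intro x hx
    have hx₀ : 0 < x := hr₀.trans_le hx.1
    have hvx := hneg x hx
    have hsq : v x ^ 2 ≤ M ^ 2 :=
      sq_le_sq.2 ((hM x (Ico_subset_Icc_self hx)).trans (le_abs_self M))
    have hy : v x / x ≤ 0 := div_nonpos_of_nonpos_of_nonneg hvx.le hx₀.le
    calc (1 + v x ^ 2) * g (v x / x)
        ≤ (1 + v x ^ 2) * (max C 0 * -(v x / x)) := by
          gcongr
          exact (hup _ hy).trans (mul_le_mul_of_nonneg_right (le_max_left _ _) (neg_nonneg.2 hy))
      _ = (1 + v x ^ 2) * max C 0 * (-v x / x) := by ring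
      _ ≤ (1 + M ^ 2) * max C 0 * (-v x / r₀) := by
          have hvx' : 0 ≤ -v x / x := div_nonneg (by linarith) hx₀.le
          have hxr₀ : -v x / x ≤ -v x / r₀ := div_le_div_of_nonneg_left (by linarith) hr₀ hx.1
          gcongr
      _ = -K * v x + 0 := by ring
  have hgron := le_gronwallBound_of_liminf_deriv_right_le hcont
    (fun x hx _ hr => ((hv x hx.1).hasDerivWithinAt.liminf_right_slope_le hr))
    le_rfl hbound r₁ ⟨hr₀₁.le, le_rfl⟩
  rw [gronwallBound_ε0] at hgron
  have : v r₀ * Real.exp (-K * (r₁ - r₀)) < 0 := mul_neg_of_neg_of_pos hv₀ (Real.exp_pos _)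
  linarith

theorem strictMonoOn (hv : IsWingSolution g r₀ v) (hr₀ : 0 < r₀)
    (hneg : ∀ r, r₀ ≤ r → v r < 0) (hpos : ∀ y < 0, 0 < g y) : StrictMonoOn v (Ici r₀) := by
  refine strictMonoOn_of_hasDerivWithinAt_pos (convex_Ici r₀) hv.continuousOn
    (fun x hx => (hv x (interior_subset hx)).hasDerivWithinAt) fun x hx => ?_
  rw [interior_Ici] at hx
  exact mul_pos (by positivity)
    (hpos _ (div_neg_of_neg_of_pos (hneg x hx.le) (hr₀.trans hx)))

theorem tendsto_zero {a : ℝ} (hv : IsWingSolution g r₀ v) (hr₀ : 0 < r₀) (ha : 0 < a)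
    (hlow : ∀ y ≤ 0, a * -y ≤ g y) (hneg : ∀ r, r₀ ≤ r → v r < 0)
    (hmono : MonotoneOn v (Ici r₀)) : Tendsto v atTop (𝓝 0) := by
  refine tendsto_order.2 ⟨fun b hb => ?_, fun b hb => ?_⟩
  · by_contra hev
    have hle : ∀ r, r₀ ≤ r → v r ≤ b := fun r hr => by
      obtain ⟨s, hrs, hs⟩ := (not_eventually.1 hev).forall_exists_of_atTop r
      exact (hmono hr (hr.trans hrs) hrs).trans (not_lt.1 hs)
    have hderiv : ∀ r, r₀ ≤ r → a * -b / r ≤ (1 + v r ^ 2) * g (v r / r) := fun r hr => by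
      have hr' : 0 < r := hr₀.trans_le hr
      have hy : v r / r ≤ 0 := div_nonpos_of_nonpos_of_nonneg (hneg r hr).le hr'.le
      calc a * -b / r ≤ a * -(v r / r) := by
            rw [neg_div', mul_div_assoc]
            gcongr
            linarith [hle r hr]
        _ ≤ g (v r / r) := hlow _ hy
        _ ≤ (1 + v r ^ 2) * g (v r / r) :=
            le_mul_of_one_le_left ((mul_nonneg ha.le (by linarith)).trans (hlow _ hy))
              (le_add_of_nonneg_right (sq_nonneg _))
    have htop : Tendsto v atTop atTop :=
      tendsto_atTop_of_hasDerivAt_ge_div (f' := fun r => (1 + v r ^ 2) * g (v r / r))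
        (mul_pos ha (neg_pos.2 hb)) hr₀ hv hderiv
    obtain ⟨r, hvr, hr⟩ := ((htop.eventually_gt_atTop 0).and (eventually_ge_atTop r₀)).exists
    exact lt_asymm hvr (hneg r hr)
  · filter_upwards [eventually_ge_atTop r₀] with r hr
    exact (hneg r hr).trans hb

end IsWingSolution

/-- The lower wing branch of the Q_{k+1,k}-translator: v is increasing,
stays negative, and tends to 0 at infinity. -/
theorem stmt17 (n k : ℕ) (hk : 1 ≤ k) (hkn : k + 1 < n)
    (g : ℝ → ℝ)
    (hg : ∀ y : ℝ, g y = ((n : ℝ) - k) / ((k : ℝ) + 1) * y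
      * (((k : ℝ) + 1) - ((n : ℝ) - k - 1) * y) / (((n : ℝ) - k) * y - k))
    (r₀ : ℝ) (hr₀ : 0 < r₀) (v : ℝ → ℝ) (hv₀ : v r₀ < 0)
    (hode : ∀ r : ℝ, r₀ ≤ r → HasDerivAt v ((1 + (v r) ^ 2) * g (v r / r)) r) :
    StrictMonoOn v (Set.Ici r₀) ∧
    (∀ r : ℝ, r₀ ≤ r → v r < 0) ∧
    Tendsto v atTop (nhds 0) := by
  obtain rfl : g = wingRhs n k := funext hg
  have hv : IsWingSolution (wingRhs n k) r₀ v := hode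
  have hK : (0 : ℝ) < k := by exact_mod_cast hk
  have hKN : (k : ℝ) + 1 < n := by exact_mod_cast hkn
  have hKN' : (k : ℝ) < n := by linarith
  have ha : 0 < ((n : ℝ) - k - 1) / (k + 1) := div_pos (by linarith) (by linarith)
  have hlow := fun y (hy : y ≤ 0) => mul_neg_le_wingRhs hK hKN' hy
  have hneg := hv.lt_zero hr₀ hv₀ fun y hy => wingRhs_le_mul_neg hK hKN' hy
  have hmono := hv.strictMonoOn hr₀ hneg fun y hy =>
    (mul_pos ha (neg_pos.2 hy)).trans_le (hlow y hy.le)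
  exact ⟨hmono, hneg, hv.tendsto_zero hr₀ ha hlow hneg hmono.monotoneOn⟩
end
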